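/- arXiv:2101.08168 — 6 statements merged into one kernel-verified Lean document; each statement's English description precedes it below -/
import Mathlib

section
/- For every β > −1 and every k ≥ 1, the Nesterov residual polynomial satisfies r_k(λ) = (1−λ)^{(k+1)/2} · C_{k−1}^{((β+1)/2)}(√(1−λ)) / C_{k−1}^{((β+1)/2)}(1) for all λ ∈ [0,1]. -/
/-- Momentum sequence `α_k = (k-1)/(k+β)`. -/
noncomputable def nesterovAlpha (β : ℝ) (k : ℕ) : ℝ := ((k : ℝ) - 1) / ((k : ℝ) + β)

/-- Residual polynomials of Nesterov's accelerated Landweber iteration. -/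
noncomputable def nesterovRes (β : ℝ) : ℕ → ℝ → ℝ
  | 0, _ => 1
  | 1, l => 1 - l
  | (k + 2), l =>
      (1 - l) * (nesterovRes β (k + 1) l +
        nesterovAlpha β (k + 1) * (nesterovRes β (k + 1) l - nesterovRes β k l))

/-- Gegenbauer (ultraspherical) polynomials `C_n^{(a)}`. -/
noncomputable def gegenbauer (a : ℝ) : ℕ → ℝ → ℝ
  | 0, _ => 1
  | 1, x => 2 * a * x
  | (n + 2), x =>
      (2 * (((n : ℝ) + 2) + a - 1) * x * gegenbauer a (n + 1) x -
        (((n : ℝ) + 2) + 2 * a - 2) * gegenbauer a n x) / ((n : ℝ) + 2)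

lemma geg_one (β : ℝ) (n : ℕ) :
    gegenbauer ((β+1)/2) (n+1) 1 = (((n:ℝ)+1+β)/((n:ℝ)+1)) * gegenbauer ((β+1)/2) n 1 := by
  induction n with
  | zero => simp [gegenbauer]; ring
  | succ m ih =>
    show gegenbauer ((β+1)/2) (m+2) 1 = _
    rw [gegenbauer, ih]
    have h1 : ((m:ℝ)+1) ≠ 0 := by positivity
    have h2 : ((m:ℝ)+2) ≠ 0 := by positivity
    push_cast
    field_simp
    ring

lemma geg_one_pos (β : ℝ) (hβ : -1 < β) (n : ℕ) : 0 < gegenbauer ((β+1)/2) n 1 := by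
  induction n with
  | zero => simp [gegenbauer]
  | succ m ih =>
    rw [geg_one]
    have : (0:ℝ) < (m:ℝ)+1+β := by have := Nat.cast_nonneg (α := ℝ) m; linarith
    positivity

lemma key (β : ℝ) (hβ : -1 < β) (l : ℝ) (hl1 : l ≤ 1) (k : ℕ) :
    gegenbauer ((β+1)/2) k 1 * nesterovRes β (k+1) l
      = Real.sqrt (1-l) ^ (k+2) * gegenbauer ((β+1)/2) k (Real.sqrt (1-l)) := by
  set s := Real.sqrt (1-l) with hs
  have hs2 : s^2 = 1 - l := Real.sq_sqrt (by linarith)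
  induction k using Nat.twoStepInduction with
  | zero =>
    show (1:ℝ) * (1 - l) = s^2 * 1
    rw [hs2]; ring
  | one =>
    show (2*((β+1)/2)*1) * ((1-l) * (nesterovRes β 1 l + nesterovAlpha β 1 * (nesterovRes β 1 l - nesterovRes β 0 l)))
      = s^3 * (2*((β+1)/2)*s)
    have : nesterovAlpha β 1 = 0 := by simp [nesterovAlpha]
    rw [this]
    show (2*((β+1)/2)*1) * ((1-l) * ((1-l) + 0 * ((1-l) - 1))) = s^3 * (2*((β+1)/2)*s)
    have : s^3 * (2*((β+1)/2)*s) = (β+1) * (s^2)^2 := by ring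
    rw [this, hs2]; ring
  | more m h1 h2 =>
    -- Goal: C_{m+2}(1) * r_{m+3} = s^(m+4) * C_{m+2}(s)
    have hC1pos := geg_one_pos β hβ m
    have hC2pos := geg_one_pos β hβ (m+1)
    have hm1 : ((m:ℝ)+1) ≠ 0 := by positivity
    have hm2 : ((m:ℝ)+2) ≠ 0 := by positivity
    have hb1 : ((m:ℝ)+1+β) ≠ 0 := by
      have := Nat.cast_nonneg (α := ℝ) m; intro h; linarith [hβ]
    have hb2 : ((m:ℝ)+2+β) ≠ 0 := by
      have := Nat.cast_nonneg (α := ℝ) m; intro h; linarith [hβ]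
    -- express r_{m+1}, r_{m+2}
    have e1 : nesterovRes β (m+1) l = s^(m+2) * gegenbauer ((β+1)/2) m s / gegenbauer ((β+1)/2) m 1 := by
      rw [eq_div_iff (ne_of_gt hC1pos)]; linarith [h1]
    have e2 : nesterovRes β (m+2) l = s^(m+3) * gegenbauer ((β+1)/2) (m+1) s / gegenbauer ((β+1)/2) (m+1) 1 := by
      rw [eq_div_iff (ne_of_gt hC2pos)]; linarith [h2]
    have halpha : nesterovAlpha β (m+2) = ((m:ℝ)+1)/((m:ℝ)+2+β) := by
      simp [nesterovAlpha]; ring_nf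
    have hres : nesterovRes β (m+3) l = (1-l) * (nesterovRes β (m+2) l +
        nesterovAlpha β (m+2) * (nesterovRes β (m+2) l - nesterovRes β (m+1) l)) := rfl
    have hgs : gegenbauer ((β+1)/2) (m+2) s =
        (2 * (((m:ℝ)+2) + (β+1)/2 - 1) * s * gegenbauer ((β+1)/2) (m+1) s -
          (((m:ℝ)+2) + 2*((β+1)/2) - 2) * gegenbauer ((β+1)/2) m s) / ((m:ℝ)+2) := rfl
    have hg1 : gegenbauer ((β+1)/2) (m+2) 1 = (((m:ℝ)+2+β)/((m:ℝ)+2)) * gegenbauer ((β+1)/2) (m+1) 1 := by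
      rw [geg_one β (m+1)]; push_cast; ring
    have hg1' : gegenbauer ((β+1)/2) (m+1) 1 = (((m:ℝ)+1+β)/((m:ℝ)+1)) * gegenbauer ((β+1)/2) m 1 :=
      geg_one β m
    rw [hres, e1, e2, halpha, hgs, hg1, hg1', ← hs2]
    field_simp
    ring

theorem nesterov_residual_gegenbauer (β : ℝ) (hβ : -1 < β) (k : ℕ) (hk : 1 ≤ k)
    (l : ℝ) (hl : l ∈ Set.Icc (0 : ℝ) 1) :
    nesterovRes β k l =
      (1 - l) ^ (((k : ℝ) + 1) / 2) *
        (gegenbauer ((β + 1) / 2) (k - 1) (Real.sqrt (1 - l)) /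
          gegenbauer ((β + 1) / 2) (k - 1) 1) := by
  obtain ⟨hl0, hl1⟩ := hl
  obtain ⟨m, rfl⟩ := Nat.exists_eq_add_of_le hk
  set s := Real.sqrt (1-l) with hs
  have h1l : (0:ℝ) ≤ 1 - l := by linarith
  have hpow : (1 - l) ^ (((((1+m) : ℕ) : ℝ) + 1) / 2) = s ^ (m+2) := by
    rw [hs, Real.sqrt_eq_rpow, ← Real.rpow_natCast ((1-l) ^ ((1:ℝ)/2)) (m+2),
      ← Real.rpow_mul h1l]
    push_cast
    norm_num
    ring_nf
  rw [hpow]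
  have hkey := key β hβ l hl1 m
  have hCpos := geg_one_pos β hβ m
  have : (1+m) - 1 = m := by omega
  rw [this, show 1 + m = m + 1 from by omega, eq_comm, mul_div_assoc', div_eq_iff (ne_of_gt hCpos)]
  rw [← hs] at hkey
  linarith [hkey]
end

section
/- For every β > −1, every k ≥ 0, and every λ ∈ [0,1], the Nesterov residual polynomial satisfies |r_k(λ)| ≤ 1. -/
/-!
The energy `E_k = λ r_{k+1}(λ)² + (r_{k+1}(λ) - r_k(λ))²` does not increase along the recursion,
because the momentum coefficients satisfy `|α_k| ≤ 1` for `k ≥ 1`. Hence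
`λ r_{k+1}² ≤ E_0 = λ(1-λ)² + λ² ≤ λ`, which gives `r_{k+1}² ≤ 1` for `λ > 0`; at `λ = 0` every
`r_k` equals `1`.
-/

lemma momentum_step_energy_le {l a v u : ℝ} (hl₀ : 0 ≤ l) (hl₁ : l ≤ 1) (ha : |a| ≤ 1) :
    l * ((1 - l) * (v + a * (v - u))) ^ 2 + ((1 - l) * (v + a * (v - u)) - v) ^ 2
      ≤ l * v ^ 2 + (v - u) ^ 2 := by
  have hdrop : l * v ^ 2 + (v - u) ^ 2
      - (l * ((1 - l) * (v + a * (v - u))) ^ 2 + ((1 - l) * (v + a * (v - u)) - v) ^ 2)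
      = l ^ 2 * (1 - l) * (v + a * (v - u)) ^ 2 + (1 - (1 - l) * a ^ 2) * (v - u) ^ 2 := by
    ring
  have ha2 : a ^ 2 ≤ 1 := (sq_le_one_iff_abs_le_one a).2 ha
  have hfirst : 0 ≤ l ^ 2 * (1 - l) * (v + a * (v - u)) ^ 2 := by
    have : 0 ≤ 1 - l := by linarith
    positivity
  have hsecond : 0 ≤ (1 - (1 - l) * a ^ 2) * (v - u) ^ 2 := by
    have : (1 - l) * a ^ 2 ≤ 1 := by nlinarith
    exact mul_nonneg (by linarith) (sq_nonneg _)
  linarith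

lemma abs_nesterovAlpha_le_one {β : ℝ} (hβ : -1 < β) {k : ℕ} (hk : 1 ≤ k) :
    |nesterovAlpha β k| ≤ 1 := by
  have hk' : (1 : ℝ) ≤ k := by exact_mod_cast hk
  have hden : 0 < (k : ℝ) + β := by linarith
  rw [nesterovAlpha, abs_le, le_div_iff₀ hden, div_le_one hden]
  constructor <;> linarith

lemma nesterovRes_zero_right (β : ℝ) (k : ℕ) : nesterovRes β k 0 = 1 := by
  induction k using Nat.twoStepInduction with
  | zero => rfl
  | one => norm_num [nesterovRes]
  | more k ih₁ ih₂ => simp [nesterovRes, ih₁, ih₂]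

noncomputable def nesterovEnergy (β l : ℝ) (k : ℕ) : ℝ :=
  l * nesterovRes β (k + 1) l ^ 2 + (nesterovRes β (k + 1) l - nesterovRes β k l) ^ 2

section Energy

variable {β l : ℝ}

lemma nesterovEnergy_antitone (hβ : -1 < β) (hl : l ∈ Set.Icc (0 : ℝ) 1) :
    Antitone (nesterovEnergy β l) :=
  antitone_nat_of_succ_le fun k =>
    momentum_step_energy_le hl.1 hl.2 (abs_nesterovAlpha_le_one hβ k.succ_pos)

lemma nesterovEnergy_le (hβ : -1 < β) (hl : l ∈ Set.Icc (0 : ℝ) 1) (k : ℕ) :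
    nesterovEnergy β l k ≤ l :=
  calc nesterovEnergy β l k
      ≤ nesterovEnergy β l 0 := nesterovEnergy_antitone hβ hl (Nat.zero_le k)
    _ = l * (1 - l) ^ 2 + l ^ 2 := by simp only [nesterovEnergy, nesterovRes]; ring
    _ ≤ l := by nlinarith [hl.1, hl.2]

lemma sq_nesterovRes_le_one (hβ : -1 < β) (hl : l ∈ Set.Icc (0 : ℝ) 1) :
    ∀ k, nesterovRes β k l ^ 2 ≤ 1
  | 0 => by simp [nesterovRes]
  | k + 1 => by
    rcases hl.1.eq_or_lt with rfl | hpos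
    · simp [nesterovRes_zero_right]
    · have henergy : l * nesterovRes β (k + 1) l ^ 2 ≤ l * 1 := by
        have := nesterovEnergy_le hβ hl k
        rw [nesterovEnergy] at this
        linarith [sq_nonneg (nesterovRes β (k + 1) l - nesterovRes β k l)]
      exact le_of_mul_le_mul_left henergy hpos

end Energy

theorem nesterov_residual_bound (β : ℝ) (hβ : -1 < β) (k : ℕ)
    (l : ℝ) (hl : l ∈ Set.Icc (0 : ℝ) 1) :
    |nesterovRes β k l| ≤ 1 :=
  (sq_le_one_iff_abs_le_one _).1 (sq_nesterovRes_le_one hβ hl k)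
end

section
/- For every β > −1 and every λ with 0 < λ < 1, the Nesterov residual polynomials satisfy r_k(λ) → 0 as k → ∞. -/
theorem nesterov_residual_tendsto_zero (β : ℝ) (hβ : -1 < β)
    (l : ℝ) (hl0 : 0 < l) (hl1 : l < 1) :
    Filter.Tendsto (fun k : ℕ => nesterovRes β k l) Filter.atTop (nhds 0) := by
  set r : ℕ → ℝ := fun k => nesterovRes β k l with hr
  set q : ℝ := 1 - l with hq
  have hq0 : 0 < q := by simp [hq]; linarith
  have hq1 : q < 1 := by simp [hq]; linarith
  -- Lyapunov energy
  set E : ℕ → ℝ := fun k => (r (k+1))^2 - 2*q*(r (k+1))*(r k) + q*(r k)^2 with hE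
  have hstep : ∀ k, E (k+1) ≤ q * E k := by
    intro k
    set a : ℝ := nesterovAlpha β (k+1) with haa
    have hd : (0:ℝ) < (k+1 : ℕ) + β := by push_cast; linarith [Nat.cast_nonneg (α := ℝ) k]
    have ha0 : 0 ≤ a := by
      rw [haa, nesterovAlpha]
      apply div_nonneg _ hd.le
      push_cast; linarith [Nat.cast_nonneg (α := ℝ) k]
    have ha1 : a ≤ 1 := by
      rw [haa, nesterovAlpha]
      rw [div_le_one hd]
      push_cast; linarith
    have hrec : r (k+2) = q * (r (k+1) + a * (r (k+1) - r k)) := by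
      simp only [hr, hq, haa]
      rfl
    have key : E (k+1) = q * E k - q^2 * (1 - a^2) * (r (k+1) - r k)^2 := by
      simp only [hE]
      rw [show k + 1 + 1 = k + 2 from rfl, hrec]
      ring
    nlinarith [sq_nonneg (r (k+1) - r k), sq_nonneg q, mul_nonneg (mul_nonneg (sq_nonneg q)
      (by nlinarith : (0:ℝ) ≤ 1 - a^2)) (sq_nonneg (r (k+1) - r k))]
  have hgeo : ∀ k, E k ≤ q ^ k * E 0 := by
    intro k
    induction k with
    | zero => simp
    | succ n ih =>
      calc E (n+1) ≤ q * E n := hstep n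
        _ ≤ q * (q ^ n * E 0) := by nlinarith
        _ = q ^ (n+1) * E 0 := by ring
  have hE0 : E 0 = q * l := by
    have h0 : r 0 = 1 := rfl
    have h1 : r 1 = 1 - l := rfl
    simp only [hE, h0, h1, hq]; ring
  -- E k controls r (k+1)
  have hcontrol : ∀ k, l * (r (k+1))^2 ≤ E k := by
    intro k
    have : E k - l * (r (k+1))^2 = q * (r (k+1) - r k)^2 := by
      simp only [hE, hq]; ring
    nlinarith [sq_nonneg (r (k+1) - r k)]
  have hbound : ∀ k, |r (k+1)| ≤ Real.sqrt q ^ (k+1) := by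
    intro k
    have h1 : (r (k+1))^2 ≤ q ^ (k+1) := by
      have := hcontrol k
      have := hgeo k
      rw [hE0] at this
      have hq' : q ^ k * (q * l) = (q ^ (k+1)) * l := by ring
      nlinarith
    calc |r (k+1)| = Real.sqrt ((r (k+1))^2) := (Real.sqrt_sq_eq_abs _).symm
      _ ≤ Real.sqrt (q ^ (k+1)) := Real.sqrt_le_sqrt h1
      _ = Real.sqrt q ^ (k+1) := by
          rw [show q ^ (k+1) = (Real.sqrt q ^ (k+1))^2 by
                rw [← pow_mul, mul_comm, pow_mul, Real.sq_sqrt hq0.le],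
              Real.sqrt_sq (pow_nonneg (Real.sqrt_nonneg q) _)]
  have hsq1 : Real.sqrt q < 1 := by
    rw [show (1:ℝ) = Real.sqrt 1 from (Real.sqrt_one).symm]
    exact Real.sqrt_lt_sqrt hq0.le hq1
  have hsq0 : 0 ≤ Real.sqrt q := Real.sqrt_nonneg q
  have hg : Filter.Tendsto (fun k : ℕ => Real.sqrt q ^ (k+1)) Filter.atTop (nhds 0) := by
    have h := tendsto_pow_atTop_nhds_zero_of_lt_one hsq0 hsq1
    exact (Filter.tendsto_add_atTop_iff_nat 1).mpr h
  have hshift : Filter.Tendsto (fun k : ℕ => r (k+1)) Filter.atTop (nhds 0) := by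
    apply squeeze_zero_norm _ hg
    intro k
    simpa [Real.norm_eq_abs] using hbound k
  exact (Filter.tendsto_add_atTop_iff_nat 1).mp hshift
end

section
/- Let X, Y be Hilbert spaces and A : X → Y a bounded linear operator with ‖A*A‖ ≤ 1, let β > −1, and let y, y^δ ∈ Y with ‖y − y^δ‖ ≤ δ. Let x_k^δ and x_k denote the Nesterov iterates computed from y^δ and from y, respectively. Then for all k ≥ 1, ‖x_k^δ − x_k‖ ≤ √2 · √((k−1)² + (k+1)/2) · δ ≤ √2 · k · δ. -/
/-- Nesterov's accelerated Landweber iteration for the equation `A x = y`: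
`x_0 = 0`, `x_1 = A* y`, and `x_{k+1} = z_k + A*(y - A z_k)` where
`z_k = x_k + α_k (x_k - x_{k-1})`. -/
noncomputable def nesterovIter {X Y : Type*} [NormedAddCommGroup X] [InnerProductSpace ℝ X]
    [CompleteSpace X] [NormedAddCommGroup Y] [InnerProductSpace ℝ Y] [CompleteSpace Y]
    (β : ℝ) (A : X →L[ℝ] Y) (y : Y) : ℕ → X
  | 0 => 0
  | 1 => ContinuousLinearMap.adjoint A y
  | (k + 2) =>
      let z := nesterovIter β A y (k + 1) +
        nesterovAlpha β (k + 1) • (nesterovIter β A y (k + 1) - nesterovIter β A y k)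
      z + ContinuousLinearMap.adjoint A (y - A z)

namespace NesterovStabilityAux

open RealInnerProductSpace

variable {X Y : Type*} [NormedAddCommGroup X] [InnerProductSpace ℝ X] [CompleteSpace X]
  [NormedAddCommGroup Y] [InnerProductSpace ℝ Y] [CompleteSpace Y]

/-- The dual (image-space) iteration: `nesterovIter β A d k = A* (dualIter β A d k)`. -/
noncomputable def dualIter (β : ℝ) (A : X →L[ℝ] Y) (d : Y) : ℕ → Y
  | 0 => 0
  | 1 => d
  | (k + 2) =>
      let z := dualIter β A d (k + 1) +
        nesterovAlpha β (k + 1) • (dualIter β A d (k + 1) - dualIter β A d k)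
      z - A (ContinuousLinearMap.adjoint A z) + d

lemma sq_le_imp {a c : ℝ} (ha : 0 ≤ a) (hc : 0 ≤ c) (h : a ^ 2 ≤ c ^ 2) : a ≤ c := by
  nlinarith

lemma alpha_nonneg {β : ℝ} (hβ : -1 < β) (k : ℕ) : 0 ≤ nesterovAlpha β (k + 1) := by
  unfold nesterovAlpha
  have h1 : (0:ℝ) ≤ (k:ℝ) := Nat.cast_nonneg k
  apply div_nonneg <;> push_cast <;> linarith

lemma alpha_le_one {β : ℝ} (hβ : -1 < β) (k : ℕ) : nesterovAlpha β (k + 1) ≤ 1 := by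
  unfold nesterovAlpha
  have h1 : (0:ℝ) ≤ (k:ℝ) := Nat.cast_nonneg k
  apply div_le_one_of_le₀ <;> push_cast <;> linarith

lemma alpha_one (β : ℝ) : nesterovAlpha β 1 = 0 := by
  simp [nesterovAlpha]

/-- `‖(I - A A*) v‖² ≤ ‖v‖² - ‖A* v‖²` when `‖A‖ ≤ 1`. -/
lemma S_sq (A : X →L[ℝ] Y) (hA1 : ∀ x : X, ‖A x‖ ≤ ‖x‖) (v : Y) :
    ‖v - A (ContinuousLinearMap.adjoint A v)‖ ^ 2
      ≤ ‖v‖ ^ 2 - ‖ContinuousLinearMap.adjoint A v‖ ^ 2 := by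
  have h1 : ‖ContinuousLinearMap.adjoint A v‖ ^ 2
      = ⟪v, A (ContinuousLinearMap.adjoint A v)⟫ := by
    rw [← real_inner_self_eq_norm_sq]
    exact ContinuousLinearMap.adjoint_inner_left A _ v
  have h2 : ‖A (ContinuousLinearMap.adjoint A v)‖ ≤ ‖ContinuousLinearMap.adjoint A v‖ := hA1 _
  have h3 : ‖v - A (ContinuousLinearMap.adjoint A v)‖ ^ 2
      = ‖v‖ ^ 2 - 2 * ⟪v, A (ContinuousLinearMap.adjoint A v)⟫
        + ‖A (ContinuousLinearMap.adjoint A v)‖ ^ 2 := norm_sub_sq_real _ _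
  have h4 : ‖A (ContinuousLinearMap.adjoint A v)‖ ^ 2
      ≤ ‖ContinuousLinearMap.adjoint A v‖ ^ 2 := by nlinarith [norm_nonneg (A (ContinuousLinearMap.adjoint A v))]
  linarith [h3, h1, h4]

lemma S_norm (A : X →L[ℝ] Y) (hA1 : ∀ x : X, ‖A x‖ ≤ ‖x‖) (v : Y) :
    ‖v - A (ContinuousLinearMap.adjoint A v)‖ ≤ ‖v‖ := by
  have h := S_sq A hA1 v
  have h2 : ‖v - A (ContinuousLinearMap.adjoint A v)‖ ^ 2 ≤ ‖v‖ ^ 2 := by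
    nlinarith [sq_nonneg ‖ContinuousLinearMap.adjoint A v‖]
  exact sq_le_imp (norm_nonneg _) (norm_nonneg _) h2

/-- The key one-step energy estimate. -/
lemma step (A : X →L[ℝ] Y) (hA1 : ∀ x : X, ‖A x‖ ≤ ‖x‖) {α : ℝ}
    (h0 : 0 ≤ α) (h1 : α ≤ 1) (ρ w : Y) :
    ‖(ρ - α • A (ContinuousLinearMap.adjoint A w))
        - A (ContinuousLinearMap.adjoint A (ρ - α • A (ContinuousLinearMap.adjoint A w)))‖ ^ 2
      + ‖ContinuousLinearMap.adjoint A
          (ρ + α • (w - A (ContinuousLinearMap.adjoint A w)))‖ ^ 2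
      ≤ ‖ρ‖ ^ 2 + ‖ContinuousLinearMap.adjoint A w‖ ^ 2 := by
  set T := ContinuousLinearMap.adjoint A with hT
  set b := A (T w) with hb
  set σ := ρ - α • b with hσ
  have hS := S_sq A hA1 σ
  rw [← hT] at hS
  have e1 : ‖σ‖ ^ 2 = ‖ρ‖ ^ 2 - 2 * α * ⟪ρ, b⟫ + α ^ 2 * ‖b‖ ^ 2 := by
    rw [hσ, norm_sub_sq_real, real_inner_smul_right, norm_smul, Real.norm_eq_abs, mul_pow, sq_abs]
    ring
  have eTσ : T σ = T ρ - α • T b := by rw [hσ]; simp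
  have e2 : ‖T σ‖ ^ 2 = ‖T ρ‖ ^ 2 - 2 * α * ⟪T ρ, T b⟫ + α ^ 2 * ‖T b‖ ^ 2 := by
    rw [eTσ, norm_sub_sq_real, real_inner_smul_right, norm_smul, Real.norm_eq_abs, mul_pow, sq_abs]
    ring
  have eτ : T (ρ + α • (w - b)) = T ρ + α • (T w - T b) := by simp
  have e3 : ‖T ρ + α • (T w - T b)‖ ^ 2
      = ‖T ρ‖ ^ 2 + 2 * α * (⟪T ρ, T w⟫ - ⟪T ρ, T b⟫)
        + α ^ 2 * (‖T w‖ ^ 2 - 2 * ⟪T w, T b⟫ + ‖T b‖ ^ 2) := by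
    rw [norm_add_sq_real, real_inner_smul_right, inner_sub_right, norm_smul,
      Real.norm_eq_abs, mul_pow, sq_abs, norm_sub_sq_real]
    ring
  have id1 : ⟪T ρ, T w⟫ = ⟪ρ, b⟫ := ContinuousLinearMap.adjoint_inner_left A (T w) ρ
  have id2 : ⟪T w, T b⟫ = ‖b‖ ^ 2 := by
    rw [real_inner_comm]
    rw [show ⟪T b, T w⟫ = ⟪b, A (T w)⟫ from ContinuousLinearMap.adjoint_inner_left A (T w) b]
    rw [← hb]
    exact real_inner_self_eq_norm_sq _
  rw [eτ, e3]
  have hα2 : α ^ 2 ≤ 1 := by nlinarith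
  nlinarith [sq_nonneg ‖T w‖, sq_nonneg ‖b‖, mul_nonneg (sub_nonneg.2 hα2) (sq_nonneg ‖T w‖),
    mul_nonneg (sq_nonneg α) (sq_nonneg ‖b‖)]

lemma idW (β : ℝ) (A : X →L[ℝ] Y) (d : Y) (k : ℕ) :
    dualIter β A d (k + 2) - dualIter β A d (k + 1)
      = (d - A (ContinuousLinearMap.adjoint A (dualIter β A d (k + 1))))
        + nesterovAlpha β (k + 1) •
          ((dualIter β A d (k + 1) - dualIter β A d k)
            - A (ContinuousLinearMap.adjoint A (dualIter β A d (k + 1) - dualIter β A d k))) := by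
  simp only [dualIter, map_add, map_sub, map_smul, smul_sub, smul_add]
  abel

lemma idRho (β : ℝ) (A : X →L[ℝ] Y) (d : Y) (k : ℕ) :
    d - A (ContinuousLinearMap.adjoint A (dualIter β A d (k + 2)))
      = ((d - A (ContinuousLinearMap.adjoint A (dualIter β A d (k + 1))))
          - nesterovAlpha β (k + 1) •
            A (ContinuousLinearMap.adjoint A (dualIter β A d (k + 1) - dualIter β A d k)))
        - A (ContinuousLinearMap.adjoint A
            ((d - A (ContinuousLinearMap.adjoint A (dualIter β A d (k + 1))))
              - nesterovAlpha β (k + 1) •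
                A (ContinuousLinearMap.adjoint A (dualIter β A d (k + 1) - dualIter β A d k)))) := by
  simp only [dualIter, map_add, map_sub, map_smul, smul_sub, smul_add]
  abel

lemma energy (A : X →L[ℝ] Y) (hA1 : ∀ x : X, ‖A x‖ ≤ ‖x‖) {β : ℝ} (hβ : -1 < β) (d : Y) :
    ∀ k : ℕ, ‖d - A (ContinuousLinearMap.adjoint A (dualIter β A d (k + 1)))‖ ^ 2
      + ‖ContinuousLinearMap.adjoint A (dualIter β A d (k + 1) - dualIter β A d k)‖ ^ 2
      ≤ ‖d‖ ^ 2 := by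
  intro k
  induction k with
  | zero =>
      have h := S_sq A hA1 d
      have h1 : dualIter β A d 1 = d := rfl
      have h0 : dualIter β A d 0 = 0 := rfl
      rw [h1, h0, sub_zero]
      linarith
  | succ k ih =>
      rw [idRho β A d k, idW β A d k]
      exact le_trans (step A hA1 (alpha_nonneg hβ k) (alpha_le_one hβ k) _ _) ih

lemma rho_le (A : X →L[ℝ] Y) (hA1 : ∀ x : X, ‖A x‖ ≤ ‖x‖) {β : ℝ} (hβ : -1 < β) (d : Y)
    (k : ℕ) : ‖d - A (ContinuousLinearMap.adjoint A (dualIter β A d (k + 1)))‖ ≤ ‖d‖ := by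
  have h := energy A hA1 hβ d k
  refine sq_le_imp (norm_nonneg _) (norm_nonneg _) ?_
  nlinarith [sq_nonneg ‖ContinuousLinearMap.adjoint A (dualIter β A d (k + 1) - dualIter β A d k)‖]

lemma W_le (A : X →L[ℝ] Y) (hA1 : ∀ x : X, ‖A x‖ ≤ ‖x‖) {β : ℝ} (hβ : -1 < β) (d : Y) :
    ∀ k : ℕ, 1 ≤ k → ‖dualIter β A d (k + 1) - dualIter β A d k‖ ≤ (k : ℝ) * ‖d‖ := by
  intro k hk
  induction k, hk using Nat.le_induction with
  | base =>
      rw [idW β A d 0, alpha_one β, zero_smul, add_zero]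
      simpa using rho_le A hA1 hβ d 0
  | succ n hn ih =>
      rw [idW β A d n]
      have h1 := norm_add_le (d - A (ContinuousLinearMap.adjoint A (dualIter β A d (n + 1))))
        (nesterovAlpha β (n + 1) •
          ((dualIter β A d (n + 1) - dualIter β A d n)
            - A (ContinuousLinearMap.adjoint A (dualIter β A d (n + 1) - dualIter β A d n))))
      have h2 : ‖nesterovAlpha β (n + 1) •
          ((dualIter β A d (n + 1) - dualIter β A d n)
            - A (ContinuousLinearMap.adjoint A (dualIter β A d (n + 1) - dualIter β A d n)))‖
          ≤ (n : ℝ) * ‖d‖ := by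
        rw [norm_smul, Real.norm_eq_abs, abs_of_nonneg (alpha_nonneg hβ n)]
        have h3 := S_norm A hA1 (dualIter β A d (n + 1) - dualIter β A d n)
        have h4 := alpha_le_one hβ n
        have h5 := alpha_nonneg hβ n
        have h6 : ‖dualIter β A d (n + 1) - dualIter β A d n‖ ≤ (n:ℝ) * ‖d‖ := ih
        have h7 : (0:ℝ) ≤ (n:ℝ) * ‖d‖ := by positivity
        nlinarith [norm_nonneg (dualIter β A d (n + 1) - dualIter β A d n)]
      have h8 := rho_le A hA1 hβ d n
      push_cast
      linarith

lemma u_le (A : X →L[ℝ] Y) (hA1 : ∀ x : X, ‖A x‖ ≤ ‖x‖) {β : ℝ} (hβ : -1 < β) (d : Y) :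
    ∀ k : ℕ, ‖dualIter β A d (k + 1)‖ ≤ (1 + (k : ℝ) * ((k : ℝ) + 1) / 2) * ‖d‖ := by
  intro k
  induction k with
  | zero =>
      have h1 : dualIter β A d 1 = d := rfl
      rw [h1]
      push_cast
      nlinarith [norm_nonneg d]
  | succ k ih =>
      have h1 : dualIter β A d (k + 2)
          = dualIter β A d (k + 1) + (dualIter β A d (k + 2) - dualIter β A d (k + 1)) := by abel
      have h2 := norm_add_le (dualIter β A d (k + 1))
        (dualIter β A d (k + 2) - dualIter β A d (k + 1))
      rw [← h1] at h2
      have h3 := W_le A hA1 hβ d (k + 1) (Nat.le_add_left 1 k)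
      push_cast at h3 ⊢
      nlinarith [norm_nonneg d]

lemma iter_sub (β : ℝ) (A : X →L[ℝ] Y) (y yδ : Y) :
    ∀ k, nesterovIter β A yδ k - nesterovIter β A y k = nesterovIter β A (yδ - y) k
  | 0 => by simp [nesterovIter]
  | 1 => by simp [nesterovIter]
  | (k + 2) => by
      have h1 := iter_sub β A y yδ (k + 1)
      have h2 := iter_sub β A y yδ k
      simp only [nesterovIter]
      rw [← h1, ← h2]
      simp only [map_add, map_sub, map_smul, smul_sub, smul_add]
      abel

lemma iter_eq_dual (β : ℝ) (A : X →L[ℝ] Y) (d : Y) :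
    ∀ k, nesterovIter β A d k = ContinuousLinearMap.adjoint A (dualIter β A d k)
  | 0 => by simp [nesterovIter, dualIter]
  | 1 => by simp [nesterovIter, dualIter]
  | (k + 2) => by
      have h1 := iter_eq_dual β A d (k + 1)
      have h2 := iter_eq_dual β A d k
      simp only [nesterovIter, dualIter, h1, h2, map_add, map_sub, map_smul, smul_sub, smul_add]
      abel

end NesterovStabilityAux

set_option maxHeartbeats 1000000 in
open NesterovStabilityAux RealInnerProductSpace in
theorem nesterov_stability_estimate {X Y : Type*}
    [NormedAddCommGroup X] [InnerProductSpace ℝ X] [CompleteSpace X]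
    [NormedAddCommGroup Y] [InnerProductSpace ℝ Y] [CompleteSpace Y]
    (A : X →L[ℝ] Y) (hA : ‖(ContinuousLinearMap.adjoint A).comp A‖ ≤ 1)
    (β : ℝ) (hβ : -1 < β) (δ : ℝ) (y yδ : Y) (hnoise : ‖y - yδ‖ ≤ δ)
    (k : ℕ) (hk : 1 ≤ k) :
    ‖nesterovIter β A yδ k - nesterovIter β A y k‖ ≤
        Real.sqrt 2 * Real.sqrt (((k : ℝ) - 1) ^ 2 + ((k : ℝ) + 1) / 2) * δ ∧
      Real.sqrt 2 * Real.sqrt (((k : ℝ) - 1) ^ 2 + ((k : ℝ) + 1) / 2) * δ ≤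
        Real.sqrt 2 * (k : ℝ) * δ := by
  obtain ⟨m, rfl⟩ : ∃ m, k = m + 1 := ⟨k - 1, by omega⟩
  set T := ContinuousLinearMap.adjoint A with hT
  set d := yδ - y with hd
  have hdδ : ‖d‖ ≤ δ := by rw [hd, norm_sub_rev]; exact hnoise
  have hδ0 : (0:ℝ) ≤ δ := le_trans (norm_nonneg _) hnoise
  have hAnorm : ‖A‖ ≤ 1 := by
    have h := ContinuousLinearMap.norm_adjoint_comp_self A
    nlinarith [norm_nonneg A, hA, h]
  have hA1 : ∀ x : X, ‖A x‖ ≤ ‖x‖ := fun x =>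
    le_trans (A.le_opNorm x) (mul_le_of_le_one_left (norm_nonneg x) hAnorm)
  -- the core bound on the dual iterate
  set u := dualIter β A d (m + 1) with hu
  have key : ‖T u‖ ^ 2 ≤ (2 * (m : ℝ) ^ 2 + (m : ℝ) + 2) * δ ^ 2 := by
    have h1 : ‖T u‖ ^ 2 = ⟪u, A (T u)⟫ := by
      rw [← real_inner_self_eq_norm_sq]
      exact ContinuousLinearMap.adjoint_inner_left A (T u) u
    have h2 : ⟪u, A (T u)⟫ = ⟪u, d⟫ - ⟪u, d - A (T u)⟫ := by
      rw [← inner_sub_right, sub_sub_cancel]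
    have h3 : ⟪u, d⟫ ≤ ‖u‖ * ‖d‖ := real_inner_le_norm u d
    have h4 : -⟪u, d - A (T u)⟫ ≤ ‖u‖ * ‖d - A (T u)‖ := by
      have := real_inner_le_norm u (-(d - A (T u)))
      rwa [inner_neg_right, norm_neg] at this
    have h5 : ‖d - A (T u)‖ ≤ ‖d‖ := rho_le A hA1 hβ d m
    have h6 : ‖u‖ ≤ (1 + (m : ℝ) * ((m : ℝ) + 1) / 2) * ‖d‖ := u_le A hA1 hβ d m
    have h7 : (0:ℝ) ≤ ‖u‖ := norm_nonneg u
    have h8 : (0:ℝ) ≤ ‖d‖ := norm_nonneg d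
    have h9 : ‖T u‖ ^ 2 ≤ 2 * ‖u‖ * ‖d‖ := by
      rw [h1, h2]
      nlinarith [mul_le_mul_of_nonneg_left h5 h7]
    have h10 : (0:ℝ) ≤ 1 + (m : ℝ) * ((m : ℝ) + 1) / 2 := by positivity
    have h11 : ‖u‖ * ‖d‖ ≤ ((1 + (m : ℝ) * ((m : ℝ) + 1) / 2) * δ) * δ := by
      have ha : ‖u‖ ≤ (1 + (m : ℝ) * ((m : ℝ) + 1) / 2) * δ := by nlinarith
      exact mul_le_mul ha hdδ h8 (by positivity)
    nlinarith [sq_nonneg ((m:ℝ) - 1), sq_nonneg (m:ℝ), sq_nonneg δ, Nat.cast_nonneg (α := ℝ) m]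
  have hrw : nesterovIter β A yδ (m + 1) - nesterovIter β A y (m + 1) = T u := by
    rw [iter_sub β A y yδ (m + 1), ← hd, iter_eq_dual β A d (m + 1), ← hT, ← hu]
  have hcast : ((↑(m + 1) : ℝ) - 1) = (m : ℝ) := by push_cast; ring
  have hPbar : (((↑(m + 1) : ℝ)) - 1) ^ 2 + ((↑(m + 1) : ℝ) + 1) / 2
      = (m : ℝ) ^ 2 + ((m : ℝ) + 2) / 2 := by push_cast; ring
  constructor
  · rw [hrw, hPbar]
    have hsq : Real.sqrt 2 * Real.sqrt ((m : ℝ) ^ 2 + ((m : ℝ) + 2) / 2)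
        = Real.sqrt (2 * (m : ℝ) ^ 2 + (m : ℝ) + 2) := by
      rw [← Real.sqrt_mul (by norm_num : (0:ℝ) ≤ 2)]
      congr 1
      ring
    rw [hsq]
    have h1 : ‖T u‖ = Real.sqrt (‖T u‖ ^ 2) := (Real.sqrt_sq (norm_nonneg _)).symm
    rw [h1]
    have h2 : Real.sqrt (‖T u‖ ^ 2) ≤ Real.sqrt ((2 * (m : ℝ) ^ 2 + (m : ℝ) + 2) * δ ^ 2) :=
      Real.sqrt_le_sqrt key
    have h3 : Real.sqrt ((2 * (m : ℝ) ^ 2 + (m : ℝ) + 2) * δ ^ 2)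
        = Real.sqrt (2 * (m : ℝ) ^ 2 + (m : ℝ) + 2) * δ := by
      rw [Real.sqrt_mul (by positivity), Real.sqrt_sq hδ0]
    rw [h3] at h2
    exact h2
  · rw [hPbar]
    have h1 : Real.sqrt ((m : ℝ) ^ 2 + ((m : ℝ) + 2) / 2) ≤ ((m : ℝ) + 1) := by
      have h2 : ((m : ℝ) ^ 2 + ((m : ℝ) + 2) / 2) ≤ ((m : ℝ) + 1) ^ 2 := by
        nlinarith [Nat.cast_nonneg (α := ℝ) m]
      calc Real.sqrt ((m : ℝ) ^ 2 + ((m : ℝ) + 2) / 2) ≤ Real.sqrt (((m : ℝ) + 1) ^ 2) :=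
            Real.sqrt_le_sqrt h2
        _ = (m : ℝ) + 1 := Real.sqrt_sq (by positivity)
    have hc : ((↑(m + 1) : ℝ)) = (m : ℝ) + 1 := by push_cast; ring
    rw [hc]
    have h2 : (0:ℝ) ≤ Real.sqrt 2 := Real.sqrt_nonneg 2
    exact mul_le_mul_of_nonneg_right (mul_le_mul_of_nonneg_left h1 h2) hδ0
end

section
/- Let X, Y be Hilbert spaces, A : X → Y a bounded linear operator with ‖A*A‖ ≤ 1, β > −1, and let x† be the minimum-norm solution of Ax = y with y = A x†. Suppose for each δ > 0 we are given data y^δ ∈ Y with ‖y − y^δ‖ ≤ δ and a stopping index k(δ) ∈ ℕ such that k(δ) → ∞ and δ · k(δ) → 0 as δ → 0. Then the Nesterov iterates computed from y^δ satisfy ‖x_{k(δ)}^δ − x†‖ → 0 as δ → 0. -/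
open ContinuousLinearMap Filter Topology
open scoped RealInnerProductSpace

/-- `nesterovAlpha β 0 = -1/β` is never used by the iteration; replacing it by `0` makes the
momentum bounded by `1` at every index. -/
noncomputable def nesterovMomentum (β : ℝ) (k : ℕ) : ℝ := if k = 0 then 0 else nesterovAlpha β k

lemma abs_nesterovMomentum_le_one {β : ℝ} (hβ : -1 < β) (k : ℕ) : |nesterovMomentum β k| ≤ 1 := by
  rcases Nat.eq_zero_or_pos k with rfl | hk
  · simp [nesterovMomentum]
  have hk1 : (1 : ℝ) ≤ k := by exact_mod_cast hk
  have hden : 0 < (k : ℝ) + β := by linarith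
  rw [nesterovMomentum, if_neg hk.ne', nesterovAlpha, abs_div, abs_of_nonneg (by linarith),
    abs_of_pos hden, div_le_one hden]
  linarith

section Momentum

variable {Z Z' : Type*} [NormedAddCommGroup Z] [NormedSpace ℝ Z]
  [NormedAddCommGroup Z'] [NormedSpace ℝ Z'] (α : ℕ → ℝ)

noncomputable def momentumIter (B : Z →L[ℝ] Z) (η : Z) : ℕ → Z
  | 0 => 0
  | 1 => η
  | k + 2 =>
      let ζ := momentumIter B η (k + 1) +
        α (k + 1) • (momentumIter B η (k + 1) - momentumIter B η k)
      ζ - B ζ + η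

lemma momentumIter_add_two (B : Z →L[ℝ] Z) (η : Z) (k : ℕ) :
    momentumIter α B η (k + 2) =
      let ζ := momentumIter α B η (k + 1) +
        α (k + 1) • (momentumIter α B η (k + 1) - momentumIter α B η k)
      ζ - B ζ + η := by
  rw [momentumIter]

lemma momentumIter_sub (B : Z →L[ℝ] Z) (η η' : Z) (k : ℕ) :
    momentumIter α B (η - η') k = momentumIter α B η k - momentumIter α B η' k := by
  induction k using Nat.twoStepInduction with
  | zero => simp [momentumIter]
  | one => simp [momentumIter]
  | more k ih₀ ih₁ =>
    simp only [momentumIter_add_two, ih₀, ih₁, map_sub, map_add, map_smul, smul_sub]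
    abel

lemma map_momentumIter (L : Z →L[ℝ] Z') {B : Z →L[ℝ] Z} {B' : Z' →L[ℝ] Z'}
    (hL : ∀ z, L (B z) = B' (L z)) (η : Z) (k : ℕ) :
    L (momentumIter α B η k) = momentumIter α B' (L η) k := by
  induction k using Nat.twoStepInduction with
  | zero => simp [momentumIter]
  | one => simp [momentumIter]
  | more k ih₀ ih₁ =>
    simp only [momentumIter_add_two, map_add, map_sub, map_smul, hL, ih₀, ih₁]

end Momentum

section Energy

variable {Z W : Type*} [NormedAddCommGroup Z] [InnerProductSpace ℝ Z] [CompleteSpace Z]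
  [NormedAddCommGroup W] [InnerProductSpace ℝ W] [CompleteSpace W] (C : Z →L[ℝ] W)

/-- One step of the error recursion of `momentumIter` on `B = C†C`, acting on pairs `(e, s)` with
`B s = e - e_prev`; in `pairEnergy`, `‖C s‖²` stands for `⟪e - e_prev, B⁻¹ (e - e_prev)⟫`. -/
noncomputable def dampedStep (a : ℝ) (p : Z × Z) : Z × Z :=
  let w := p.1 + a • adjoint C (C p.2)
  (w - adjoint C (C w), a • p.2 - w)

noncomputable def pairEnergy (p : Z × Z) : ℝ := ‖p.1‖ ^ 2 + ‖C p.2‖ ^ 2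

lemma pairEnergy_dampedStep_add (a : ℝ) (w s : Z) :
    pairEnergy C (dampedStep C a (w - a • adjoint C (C s), s))
      + ((‖C w‖ ^ 2 - ‖adjoint C (C w)‖ ^ 2) + (1 - a ^ 2) * ‖C s‖ ^ 2
        + a ^ 2 * ‖adjoint C (C s)‖ ^ 2)
      = pairEnergy C (w - a • adjoint C (C s), s) := by
  have hw : ⟪w, adjoint C (C w)⟫ = ‖C w‖ ^ 2 := by
    rw [adjoint_inner_right, real_inner_self_eq_norm_sq]
  have hs : ⟪w, adjoint C (C s)⟫ = ⟪C s, C w⟫ := by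
    rw [adjoint_inner_right, real_inner_comm]
  simp only [pairEnergy, dampedStep, sub_add_cancel, map_sub, map_smul, norm_sub_sq_real,
    norm_smul, inner_smul_left, inner_smul_right, hw, hs, mul_pow, Real.norm_eq_abs, sq_abs,
    conj_trivial]
  ring

lemma sq_norm_apply_sub_adjoint_apply_le (hC : ‖C‖ ≤ 1) (w : Z) :
    ‖C (w - adjoint C (C w))‖ ^ 2 ≤ ‖C w‖ ^ 2 - ‖adjoint C (C w)‖ ^ 2 := by
  have h : ⟪C w, C (adjoint C (C w))⟫ = ‖adjoint C (C w)‖ ^ 2 := by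
    rw [← adjoint_inner_left, real_inner_self_eq_norm_sq]
  have hle : ‖C (adjoint C (C w))‖ ≤ ‖adjoint C (C w)‖ := by simpa using C.le_of_opNorm_le hC _
  rw [map_sub, norm_sub_sq_real, h]
  nlinarith [norm_nonneg (C (adjoint C (C w)))]

lemma dampedStep_fst (a : ℝ) (w s : Z) :
    (dampedStep C a (w - a • adjoint C (C s), s)).1 = w - adjoint C (C w) := by
  simp [dampedStep]

lemma pairEnergy_dampedStep_add_le (hC : ‖C‖ ≤ 1) {a : ℝ} (ha : |a| ≤ 1) (p : Z × Z) :
    pairEnergy C (dampedStep C a p) + ‖C (dampedStep C a p).1‖ ^ 2 ≤ pairEnergy C p := by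
  obtain ⟨e, s⟩ := p
  obtain ⟨w, rfl⟩ : ∃ w, e = w - a • adjoint C (C s) := ⟨e + a • adjoint C (C s), by simp⟩
  have hid := pairEnergy_dampedStep_add C a w s
  have hCw := sq_norm_apply_sub_adjoint_apply_le C hC w
  rw [← dampedStep_fst C a w s] at hCw
  have ha2 : a ^ 2 ≤ 1 := by nlinarith [abs_nonneg a, sq_abs a]
  nlinarith [sq_nonneg ‖C s‖, sq_nonneg ‖adjoint C (C s)‖]

end Energy

section ErrorState

variable {Z W : Type*} [NormedAddCommGroup Z] [InnerProductSpace ℝ Z] [CompleteSpace Z]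
  [NormedAddCommGroup W] [InnerProductSpace ℝ W] [CompleteSpace W] (C : Z →L[ℝ] W) (α : ℕ → ℝ)

noncomputable def errorState (x : Z) : ℕ → Z × Z
  | 0 => (x, 0)
  | k + 1 => dampedStep C (α k) (errorState x k)

lemma adjoint_apply_errorState_snd (x : Z) (k : ℕ) :
    adjoint C (C (errorState C α x (k + 1)).2)
      = (errorState C α x (k + 1)).1 - (errorState C α x k).1 := by
  simp only [errorState, dampedStep, map_sub, map_add, map_smul]
  abel

lemma errorState_fst (x : Z) (k : ℕ) :
    (errorState C α x k).1 = x - momentumIter α (adjoint C ∘L C) (adjoint C (C x)) k := by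
  induction k using Nat.twoStepInduction with
  | zero => simp [errorState, momentumIter]
  | one => simp [errorState, dampedStep, momentumIter]
  | more k ih₀ ih₁ =>
    have hvel := adjoint_apply_errorState_snd C α x k
    change (dampedStep C (α (k + 1)) (errorState C α x (k + 1))).1 = _
    simp only [dampedStep]
    rw [hvel, ih₀, ih₁, momentumIter_add_two]
    simp only [comp_apply, map_sub, map_add, map_smul, smul_sub]
    abel

variable {C α} (hC : ‖C‖ ≤ 1) (hα : ∀ k, |α k| ≤ 1)
include hC hα

lemma pairEnergy_errorState_add_sum_le (x : Z) (n : ℕ) :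
    pairEnergy C (errorState C α x n) + ∑ k ∈ Finset.range n, ‖C (errorState C α x (k + 1)).1‖ ^ 2
      ≤ ‖x‖ ^ 2 := by
  induction n with
  | zero => simp [errorState, pairEnergy]
  | succ n ih =>
    have hstep : pairEnergy C (errorState C α x (n + 1)) + ‖C (errorState C α x (n + 1)).1‖ ^ 2
        ≤ pairEnergy C (errorState C α x n) :=
      pairEnergy_dampedStep_add_le C hC (hα n) (errorState C α x n)
    rw [Finset.sum_range_succ]
    linarith

lemma norm_errorState_fst_le (x : Z) (k : ℕ) : ‖(errorState C α x k).1‖ ≤ ‖x‖ := by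
  have h := pairEnergy_errorState_add_sum_le hC hα x k
  have hsum : 0 ≤ ∑ j ∈ Finset.range k, ‖C (errorState C α x (j + 1)).1‖ ^ 2 :=
    Finset.sum_nonneg fun _ _ => sq_nonneg _
  rw [pairEnergy] at h
  refine (pow_le_pow_iff_left₀ (norm_nonneg _) (norm_nonneg _) two_ne_zero).mp ?_
  nlinarith [sq_nonneg ‖C (errorState C α x k).2‖]

lemma tendsto_apply_errorState_fst (x : Z) :
    Tendsto (fun k => C (errorState C α x k).1) atTop (𝓝 0) := by
  have hsum : Summable fun k => ‖C (errorState C α x (k + 1)).1‖ ^ 2 :=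
    summable_of_sum_range_le (c := ‖x‖ ^ 2) (fun _ => sq_nonneg _) fun n => by
      have := pairEnergy_errorState_add_sum_le hC hα x n
      have : 0 ≤ pairEnergy C (errorState C α x n) := by unfold pairEnergy; positivity
      linarith
  rw [← tendsto_add_atTop_iff_nat 1, tendsto_zero_iff_norm_tendsto_zero]
  simpa using hsum.tendsto_atTop_zero.sqrt

end ErrorState

section NoiseAmplification

variable {Z W : Type*} [NormedAddCommGroup Z] [InnerProductSpace ℝ Z] [CompleteSpace Z]
  [NormedAddCommGroup W] [InnerProductSpace ℝ W] [CompleteSpace W] {C : Z →L[ℝ] W} {α : ℕ → ℝ}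
  (hC : ‖C‖ ≤ 1) (hα : ∀ k, |α k| ≤ 1)
include hC hα

lemma norm_adjoint_apply_momentumIter_le (η : Z) (k : ℕ) :
    ‖adjoint C (C (momentumIter α (adjoint C ∘L C) η k))‖ ≤ 2 * ‖η‖ := by
  have h : adjoint C (C (momentumIter α (adjoint C ∘L C) η k)) = η - (errorState C α η k).1 := by
    rw [errorState_fst, ← comp_apply, map_momentumIter α (adjoint C ∘L C) (fun _ => rfl)]
    abel
  rw [h]
  linarith [norm_sub_le η (errorState C α η k).1, norm_errorState_fst_le hC hα η k]

lemma norm_momentumIter_succ_sub_le (η : Z) (k : ℕ) :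
    ‖momentumIter α (adjoint C ∘L C) η (k + 1) - momentumIter α (adjoint C ∘L C) η k‖
      ≤ 7 * (k + 1) * ‖η‖ := by
  set B := adjoint C ∘L C
  set M := momentumIter α B η
  have hBM : ∀ j, ‖B (M j)‖ ≤ 2 * ‖η‖ := norm_adjoint_apply_momentumIter_le hC hα η
  have hsmul : ∀ j (v : Z), ‖α j • v‖ ≤ ‖v‖ := fun j v => by
    rw [norm_smul, Real.norm_eq_abs]
    exact mul_le_of_le_one_left (norm_nonneg v) (hα j)
  induction k with
  | zero => simpa [M, momentumIter] using le_mul_of_one_le_left (norm_nonneg η) (by norm_num)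
  | succ k ih =>
    set ζ := M (k + 1) + α (k + 1) • (M (k + 1) - M k)
    have hrec : M (k + 2) - M (k + 1) = α (k + 1) • (M (k + 1) - M k) - B ζ + η := by
      simp only [M, ζ, momentumIter_add_two]
      abel
    have hBζ : ‖B ζ‖ ≤ 6 * ‖η‖ := by
      have h := norm_sub_le (B (M (k + 1))) (B (M k))
      calc ‖B ζ‖ ≤ ‖B (M (k + 1))‖ + ‖B (M (k + 1)) - B (M k)‖ := by
            simpa only [ζ, map_add, map_smul, map_sub] using
              norm_add_le_of_le le_rfl (hsmul (k + 1) (B (M (k + 1)) - B (M k)))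
        _ ≤ 6 * ‖η‖ := by linarith [hBM (k + 1), hBM k]
    rw [hrec]
    calc ‖α (k + 1) • (M (k + 1) - M k) - B ζ + η‖
        ≤ ‖α (k + 1) • (M (k + 1) - M k)‖ + ‖B ζ‖ + ‖η‖ :=
          norm_add_le_of_le (norm_sub_le _ _) le_rfl
      _ ≤ 7 * (k + 1) * ‖η‖ + 6 * ‖η‖ + ‖η‖ := by gcongr; exact (hsmul _ _).trans ih
      _ = 7 * ((k + 1 : ℕ) + 1) * ‖η‖ := by push_cast; ring

lemma norm_momentumIter_le (η : Z) (k : ℕ) :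
    ‖momentumIter α (adjoint C ∘L C) η k‖ ≤ 7 * k ^ 2 * ‖η‖ := by
  induction k with
  | zero => simp [momentumIter]
  | succ k ih =>
    have hstep := norm_momentumIter_succ_sub_le hC hα η k
    have htri := norm_le_norm_add_norm_sub' (momentumIter α (adjoint C ∘L C) η (k + 1))
      (momentumIter α (adjoint C ∘L C) η k)
    push_cast
    nlinarith [norm_nonneg η, (k.cast_nonneg : (0 : ℝ) ≤ k)]

lemma norm_apply_momentumIter_le (η : Z) (k : ℕ) :
    ‖C (momentumIter α (adjoint C ∘L C) η k)‖ ≤ 4 * k * ‖η‖ := by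
  set m := momentumIter α (adjoint C ∘L C) η k
  have hsq : ‖C m‖ ^ 2 ≤ 14 * k ^ 2 * ‖η‖ ^ 2 := by
    calc ‖C m‖ ^ 2 = ⟪adjoint C (C m), m⟫ := by
          rw [adjoint_inner_left, real_inner_self_eq_norm_sq]
      _ ≤ ‖adjoint C (C m)‖ * ‖m‖ := real_inner_le_norm _ _
      _ ≤ (2 * ‖η‖) * (7 * k ^ 2 * ‖η‖) := by
          gcongr
          · exact norm_adjoint_apply_momentumIter_le hC hα η k
          · exact norm_momentumIter_le hC hα η k
      _ = 14 * k ^ 2 * ‖η‖ ^ 2 := by ring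
  refine (pow_le_pow_iff_left₀ (norm_nonneg _) (by positivity) two_ne_zero).mp ?_
  nlinarith [sq_nonneg ((k : ℝ) * ‖η‖)]

end NoiseAmplification

section Landweber

variable {X Y : Type*} [NormedAddCommGroup X] [InnerProductSpace ℝ X] [CompleteSpace X]
  [NormedAddCommGroup Y] [InnerProductSpace ℝ Y] [CompleteSpace Y] (A : X →L[ℝ] Y)

lemma norm_le_one_of_norm_adjoint_comp_self_le_one (hA : ‖adjoint A ∘L A‖ ≤ 1) : ‖A‖ ≤ 1 := by
  rw [norm_adjoint_comp_self] at hA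
  nlinarith [norm_nonneg A]

lemma nesterovIter_eq_momentumIter (β : ℝ) (y : Y) (k : ℕ) :
    nesterovIter β A y k = momentumIter (nesterovMomentum β) (adjoint A ∘L A) (adjoint A y) k := by
  induction k using Nat.twoStepInduction with
  | zero => rfl
  | one => rfl
  | more k ih₀ ih₁ =>
    rw [nesterovIter, momentumIter_add_two, ih₀, ih₁, nesterovMomentum, if_neg k.succ_ne_zero]
    simp only [comp_apply, map_sub]
    abel

lemma momentumIter_adjoint (α : ℕ → ℝ) (η : Y) (k : ℕ) :
    momentumIter α (adjoint A ∘L A) (adjoint A η) k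
      = adjoint A (momentumIter α (adjoint (adjoint A) ∘L adjoint A) η k) :=
  (map_momentumIter α (adjoint A) (fun _ => by simp [adjoint_adjoint]) η k).symm

variable {A} {α : ℕ → ℝ} (hA : ‖A‖ ≤ 1) (hα : ∀ k, |α k| ≤ 1)
include hA hα

lemma norm_momentumIter_adjoint_le (η : Y) (k : ℕ) :
    ‖momentumIter α (adjoint A ∘L A) (adjoint A η) k‖ ≤ 4 * k * ‖η‖ := by
  rw [momentumIter_adjoint]
  exact norm_apply_momentumIter_le (by rwa [LinearIsometryEquiv.norm_map]) hα η k

lemma tendsto_sub_momentumIter_of_mem_closure {x : X}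
    (hx : x ∈ closure (Set.range (adjoint A))) :
    Tendsto (fun k => x - momentumIter α (adjoint A ∘L A) (adjoint A (A x)) k) atTop (𝓝 0) := by
  set F : ℕ → X → X := fun k x => x - momentumIter α (adjoint A ∘L A) (adjoint A (A x)) k
  have hF : Equicontinuous F := by
    refine (LipschitzWith.uniformEquicontinuous F 1 fun k => ?_).equicontinuous
    refine LipschitzWith.of_dist_le_mul fun x x' => ?_
    have hsub : F k x - F k x' = F k (x - x') := by
      simp only [F, map_sub, momentumIter_sub]
      abel
    rw [dist_eq_norm, dist_eq_norm, hsub, NNReal.coe_one, one_mul]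
    simp only [F, ← errorState_fst]
    exact norm_errorState_fst_le hA hα _ k
  have hrange : Set.range (adjoint A) ⊆ {x | Tendsto (F · x) atTop (𝓝 0)} := by
    rintro _ ⟨w, rfl⟩
    have hcomm : adjoint A (A (adjoint A w)) = adjoint A (adjoint (adjoint A) (adjoint A w)) := by
      rw [adjoint_adjoint]
    have h : ∀ k, F k (adjoint A w) = adjoint A (errorState (adjoint A) α w k).1 := fun k => by
      simp only [F]
      rw [hcomm, momentumIter_adjoint, errorState_fst, map_sub]
    simp only [Set.mem_ofPred_eq, h]
    exact tendsto_apply_errorState_fst (by rwa [LinearIsometryEquiv.norm_map]) hα w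
  exact (hF.isClosed_setOfPred_tendsto continuous_const).closure_subset_iff.mpr hrange hx

end Landweber

theorem nesterov_convergence {X Y : Type*}
    [NormedAddCommGroup X] [InnerProductSpace ℝ X] [CompleteSpace X]
    [NormedAddCommGroup Y] [InnerProductSpace ℝ Y] [CompleteSpace Y]
    (A : X →L[ℝ] Y) (hA : ‖(ContinuousLinearMap.adjoint A).comp A‖ ≤ 1)
    (β : ℝ) (hβ : -1 < β) (xdag : X) (y : Y) (hy : A xdag = y)
    (hmin : xdag ∈ closure (Set.range (ContinuousLinearMap.adjoint A)))
    (yδ : ℝ → Y) (hnoise : ∀ δ : ℝ, 0 < δ → ‖y - yδ δ‖ ≤ δ)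
    (kstop : ℝ → ℕ)
    (hkinf : Filter.Tendsto kstop (nhdsWithin 0 (Set.Ioi 0)) Filter.atTop)
    (hkδ : Filter.Tendsto (fun δ : ℝ => δ * (kstop δ : ℝ))
      (nhdsWithin 0 (Set.Ioi 0)) (nhds 0)) :
    Filter.Tendsto (fun δ : ℝ => ‖nesterovIter β A (yδ δ) (kstop δ) - xdag‖)
      (nhdsWithin 0 (Set.Ioi 0)) (nhds 0) := by
  have hA₁ := norm_le_one_of_norm_adjoint_comp_self_le_one A hA
  have hα := abs_nesterovMomentum_le_one hβ
  set M := momentumIter (nesterovMomentum β) (adjoint A ∘L A)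
  have hsplit : ∀ δ, nesterovIter β A (yδ δ) (kstop δ) - xdag
      = M (adjoint A (yδ δ - y)) (kstop δ) - (xdag - M (adjoint A (A xdag)) (kstop δ)) := by
    intro δ
    simp only [M]
    rw [nesterovIter_eq_momentumIter, map_sub, momentumIter_sub, hy]
    abel
  have hexact := tendsto_zero_iff_norm_tendsto_zero.mp
    ((tendsto_sub_momentumIter_of_mem_closure hA₁ hα hmin).comp hkinf)
  have hbound : ∀ᶠ δ in 𝓝[>] 0, ‖nesterovIter β A (yδ δ) (kstop δ) - xdag‖
      ≤ 4 * (δ * kstop δ) + ‖xdag - M (adjoint A (A xdag)) (kstop δ)‖ := by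
    filter_upwards [self_mem_nhdsWithin] with δ hδ
    have hnoiseδ : ‖yδ δ - y‖ ≤ δ := norm_sub_rev y (yδ δ) ▸ hnoise δ hδ
    rw [hsplit]
    calc _ ≤ ‖M (adjoint A (yδ δ - y)) (kstop δ)‖ + ‖xdag - M (adjoint A (A xdag)) (kstop δ)‖ :=
          norm_sub_le _ _
      _ ≤ 4 * kstop δ * δ + ‖xdag - M (adjoint A (A xdag)) (kstop δ)‖ := by
          gcongr
          exact (norm_momentumIter_adjoint_le hA₁ hα _ _).trans (by gcongr)
      _ = _ := by ring
  refine squeeze_zero' (Eventually.of_forall fun _ => norm_nonneg _) hbound ?_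
  simpa using (hkδ.const_mul 4).add hexact
end

section
/- Let β > −1 and μ > (β+1)/4. Then there exists a constant C > 0 (depending only on μ and β) such that for all k ≥ 1 and all λ ∈ [0,1], |r_k(λ)| · λ^μ ≤ C · k^{−(μ + (β+1)/4)}. -/
/-- transformed sequence: `nesterovRes β k (1-c^2) = c^k * nu β c k`. -/
noncomputable def nu (β c : ℝ) : ℕ → ℝ
  | 0 => 1
  | 1 => c
  | (k + 2) => c * (2 - (β + 1) / ((k : ℝ) + 1 + β)) * nu β c (k + 1)
      - (1 - (β + 1) / ((k : ℝ) + 1 + β)) * nu β c k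

/-- step size -/
noncomputable def nep (β : ℝ) (k : ℕ) : ℝ := (β + 1) / ((k : ℝ) + 1 + β)

lemma nu_step (β c : ℝ) (k : ℕ) :
    nu β c (k + 2) = c * (2 - nep β k) * nu β c (k + 1) - (1 - nep β k) * nu β c k := rfl

lemma res_eq_nu (β c : ℝ) (hβ : -1 < β) : ∀ k : ℕ,
    nesterovRes β k (1 - c ^ 2) = c ^ k * nu β c k := by
  have key : ∀ k : ℕ, nesterovRes β k (1 - c ^ 2) = c ^ k * nu β c k ∧
      nesterovRes β (k + 1) (1 - c ^ 2) = c ^ (k + 1) * nu β c (k + 1) := by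
    intro k
    induction k with
    | zero =>
      refine ⟨by simp [nesterovRes, nu], ?_⟩
      show (1 - (1 - c ^ 2)) = c ^ (0 + 1) * nu β c (0 + 1)
      simp [nu]; ring
    | succ n ih =>
      refine ⟨ih.2, ?_⟩
      have hd : ((n : ℝ) + 1 + β) ≠ 0 := by
        have : (0:ℝ) ≤ (n:ℝ) := Nat.cast_nonneg n
        intro h; linarith
      have ha : nesterovAlpha β (n + 1) = 1 - nep β n := by
        unfold nesterovAlpha nep
        push_cast
        field_simp
        ring
      show (1 - (1 - c ^ 2)) * (nesterovRes β (n + 1) (1 - c ^ 2) +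
          nesterovAlpha β (n + 1) * (nesterovRes β (n + 1) (1 - c ^ 2)
            - nesterovRes β n (1 - c ^ 2))) = _
      rw [ih.1, ih.2, ha, nu_step]
      ring
  exact fun k => (key k).1


section core
variable {c s e d X Y : ℝ}

/-- The key exact algebraic identity behind the Lyapunov step. -/
lemma core_identity (hcs : c ^ 2 + s ^ 2 = 1) :
    (1 - e) * (s * ((1 - e / 2) * X ^ 2 + (1 + e / 2) * Y ^ 2) + e * c * X * Y)
      - (s * ((1 - (e - d) / 2) * ((1 - e) * c * X - s * Y) ^ 2
          + (1 + (e - d) / 2) * ((1 - e) * s * X + c * Y) ^ 2)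
        + (e - d) * c * ((1 - e) * c * X - s * Y) * ((1 - e) * s * X + c * Y))
    = s * (d / 2 - e * d + e ^ 2 / 2 + e ^ 2 * d / 2 - e ^ 3 / 2) * X ^ 2
      + (1 - e) * c * d * X * Y - s * (d + e ^ 2) / 2 * Y ^ 2 := by
  linear_combination (- s * Y ^ 2 - s * X ^ 2 - (1/2) * s * d * Y ^ 2 + (1/2) * s * d * X ^ 2
    + (1/2) * s * e * Y ^ 2 + (3/2) * s * e * X ^ 2 - s * e * d * X ^ 2
    + (1/2) * s * e ^ 2 * d * X ^ 2 - (1/2) * s * e ^ 3 * X ^ 2 + c * d * X * Y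
    - c * e * X * Y - c * e * d * X * Y + c * e ^ 2 * X * Y) * hcs

set_option maxHeartbeats 1000000 in
/-- Core one-step Lyapunov inequality. -/
lemma core_step (hc : 0 ≤ c) (hc1 : c ≤ 1) (hs : 0 ≤ s) (hs1 : s ≤ 1)
    (hcs : c ^ 2 + s ^ 2 = 1) (hd0 : 0 ≤ d) (hde : d ≤ e) (he1 : e ≤ 1) :
    s * ((1 - (e - d) / 2) * ((1 - e) * c * X - s * Y) ^ 2
        + (1 + (e - d) / 2) * ((1 - e) * s * X + c * Y) ^ 2)
      + (e - d) * c * ((1 - e) * c * X - s * Y) * ((1 - e) * s * X + c * Y)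
    ≤ (1 - e) * (s * ((1 - e / 2) * X ^ 2 + (1 + e / 2) * Y ^ 2) + e * c * X * Y)
      + (2 * e ^ 2 + 2 * d) * (X ^ 2 + Y ^ 2) := by
  have he0 : 0 ≤ e := le_trans hd0 hde
  have key := core_identity (c := c) (s := s) (e := e) (d := d) (X := X) (Y := Y) hcs
  obtain ⟨AX, hAXdef⟩ : ∃ a : ℝ, a = d / 2 - e * d + e ^ 2 / 2 + e ^ 2 * d / 2 - e ^ 3 / 2 :=
    ⟨_, rfl⟩
  rw [← hAXdef] at key
  have hT1 : -((d / 2 + e ^ 2 / 2) * X ^ 2) ≤ s * AX * X ^ 2 := by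
    have h1 : -(d / 2 + e ^ 2 / 2) ≤ s * AX := by
      rcases le_or_gt 0 AX with h | h
      · have h4 : 0 ≤ s * AX := mul_nonneg hs h
        have h5 : 0 ≤ d / 2 + e ^ 2 / 2 := by positivity
        linarith
      · have h2 : AX ≤ s * AX := by nlinarith
        have h3 : -(d / 2 + e ^ 2 / 2) ≤ AX := by
          rw [hAXdef]
          nlinarith [mul_nonneg hd0 (sub_nonneg.mpr he1),
            mul_nonneg (sq_nonneg e) (sub_nonneg.mpr he1),
            mul_nonneg (mul_nonneg hd0 he0) he0]
        linarith
    have h6 := mul_le_mul_of_nonneg_right h1 (sq_nonneg X)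
    linarith [h6]
  have hT2 : -(d / 2 * (X ^ 2 + Y ^ 2)) ≤ (1 - e) * c * d * X * Y := by
    have ht0 : 0 ≤ (1 - e) * c := mul_nonneg (by linarith) hc
    have ht1 : (1 - e) * c ≤ 1 := mul_le_one₀ (by linarith) hc hc1
    have hb : -(d / 2 * (X ^ 2 + Y ^ 2)) ≤ d * (X * Y) := by
      nlinarith [mul_nonneg hd0 (sq_nonneg (X + Y))]
    rcases le_or_gt 0 (X * Y) with h | h
    · have h5 : 0 ≤ (1 - e) * c * d * X * Y := by
        have := mul_nonneg (mul_nonneg ht0 hd0) h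
        linarith [this]
      have h6 : 0 ≤ d * (X ^ 2 + Y ^ 2) := mul_nonneg hd0 (by positivity)
      linarith
    · have hdxy : d * (X * Y) ≤ 0 := mul_nonpos_of_nonneg_of_nonpos hd0 h.le
      have h5 : d * (X * Y) ≤ (1 - e) * c * d * X * Y := by
        nlinarith [mul_nonneg (sub_nonneg.mpr ht1) (neg_nonneg.mpr hdxy)]
      linarith
  have hT3 : s * (d + e ^ 2) / 2 * Y ^ 2 ≤ (d + e ^ 2) / 2 * Y ^ 2 := by
    have h1 : s * (d + e ^ 2) ≤ d + e ^ 2 := by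
      nlinarith [add_nonneg hd0 (sq_nonneg e)]
    have h2 := mul_le_mul_of_nonneg_right h1 (sq_nonneg Y)
    linarith
  have haux1 : 0 ≤ d * X ^ 2 := mul_nonneg hd0 (sq_nonneg X)
  have haux2 : 0 ≤ d * Y ^ 2 := mul_nonneg hd0 (sq_nonneg Y)
  have haux3 : 0 ≤ e ^ 2 * X ^ 2 := mul_nonneg (sq_nonneg e) (sq_nonneg X)
  have haux4 : 0 ≤ e ^ 2 * Y ^ 2 := mul_nonneg (sq_nonneg e) (sq_nonneg Y)
  linarith [key, hT1, hT2, hT3, haux1, haux2, haux3, haux4]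
end core

noncomputable def nE (β c : ℝ) (k : ℕ) : ℝ :=
  nu β c (k + 1) ^ 2 - 2 * c * nu β c (k + 1) * nu β c k + nu β c k ^ 2

noncomputable def nX (β c : ℝ) (k : ℕ) : ℝ := c * nu β c (k + 1) - nu β c k

noncomputable def nY (β c s : ℝ) (k : ℕ) : ℝ := s * nu β c (k + 1)

noncomputable def nG (β c s : ℝ) (k : ℕ) : ℝ :=
  s * ((1 - nep β k / 2) * nX β c k ^ 2 + (1 + nep β k / 2) * nY β c s k ^ 2)
    + nep β k * c * nX β c k * nY β c s k

section Emach
variable {β c s : ℝ} (hβ : -1 < β)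

lemma casnn (k : ℕ) : (0:ℝ) ≤ (k:ℝ) := Nat.cast_nonneg k

lemma nep_den_pos (hβ : -1 < β) (k : ℕ) : 0 < (k : ℝ) + 1 + β := by
  have := casnn k; linarith

lemma nep_pos (hβ : -1 < β) (k : ℕ) : 0 < nep β k :=
  div_pos (by linarith) (nep_den_pos hβ k)

lemma nep_le_one (hβ : -1 < β) (k : ℕ) : nep β k ≤ 1 := by
  rw [nep, div_le_one (nep_den_pos hβ k)]
  have := casnn k; linarith

lemma nep_anti (hβ : -1 < β) (k : ℕ) : nep β (k + 1) ≤ nep β k := by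
  unfold nep
  apply div_le_div_of_nonneg_left (by linarith) (nep_den_pos hβ k)
  push_cast; linarith

lemma nE_succ (hβ : -1 < β) (k : ℕ) :
    nE β c (k + 1) = nE β c k - (2 * nep β k - nep β k ^ 2) * nX β c k ^ 2 := by
  unfold nE nX
  rw [nu_step]
  ring

lemma nE_le (hβ : -1 < β) (k : ℕ) : nE β c k ≤ 1 - c ^ 2 := by
  induction k with
  | zero =>
    unfold nE
    show nu β c 1 ^ 2 - 2 * c * nu β c 1 * nu β c 0 + nu β c 0 ^ 2 ≤ 1 - c ^ 2
    simp only [nu]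
    ring_nf
    nlinarith [sq_nonneg c]
  | succ n ih =>
    rw [nE_succ hβ]
    have h1 := nep_pos hβ n
    have h2 := nep_le_one hβ n
    nlinarith [sq_nonneg (nX β c n), mul_nonneg (mul_nonneg h1.le (by linarith : (0:ℝ) ≤ 2 - nep β n)) (sq_nonneg (nX β c n))]

lemma nE_lower (hc : 0 ≤ c) (k : ℕ) :
    (1 - c) * (nu β c (k + 1) ^ 2 + nu β c k ^ 2) ≤ nE β c k := by
  unfold nE
  nlinarith [mul_nonneg hc (sq_nonneg (nu β c (k + 1) - nu β c k))]

lemma nE_eq_XY (hcs : c ^ 2 + s ^ 2 = 1) (k : ℕ) :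
    nE β c k = nX β c k ^ 2 + nY β c s k ^ 2 := by
  unfold nE nX nY
  linear_combination (- (nu β c (k + 1)) ^ 2) * hcs

lemma nX_step (hcs : c ^ 2 + s ^ 2 = 1) (k : ℕ) :
    nX β c (k + 1) = (1 - nep β k) * c * nX β c k - s * nY β c s k := by
  unfold nX nY
  rw [nu_step]
  linear_combination (nu β c (k + 1)) * hcs

lemma nY_step (k : ℕ) :
    nY β c s (k + 1) = (1 - nep β k) * s * nX β c k + c * nY β c s k := by
  unfold nX nY
  rw [nu_step]
  ring

lemma nG_step (hβ : -1 < β) (hc : 0 ≤ c) (hc1 : c ≤ 1) (hs : 0 ≤ s) (hs1 : s ≤ 1)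
    (hcs : c ^ 2 + s ^ 2 = 1) (k : ℕ) :
    nG β c s (k + 1) ≤ (1 - nep β k) * nG β c s k
      + (2 * nep β k ^ 2 + 2 * (nep β k - nep β (k + 1))) * nE β c k := by
  have hd0 : 0 ≤ nep β k - nep β (k + 1) := sub_nonneg.mpr (nep_anti hβ k)
  have hde : nep β k - nep β (k + 1) ≤ nep β k := by
    have := nep_pos hβ (k + 1); linarith
  have he1 : nep β k ≤ 1 := nep_le_one hβ k
  have hcore := core_step (X := nX β c k) (Y := nY β c s k)
    (e := nep β k) (d := nep β k - nep β (k + 1)) hc hc1 hs hs1 hcs hd0 hde he1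
  rw [nE_eq_XY (s := s) hcs]
  unfold nG
  rw [nX_step hcs, nY_step]
  have hed : nep β k - (nep β k - nep β (k + 1)) = nep β (k + 1) := by ring
  rw [hed] at hcore
  calc s * ((1 - nep β (k + 1) / 2) * ((1 - nep β k) * c * nX β c k - s * nY β c s k) ^ 2
        + (1 + nep β (k + 1) / 2) * ((1 - nep β k) * s * nX β c k + c * nY β c s k) ^ 2)
      + nep β (k + 1) * c * ((1 - nep β k) * c * nX β c k - s * nY β c s k)
        * ((1 - nep β k) * s * nX β c k + c * nY β c s k)
      ≤ (1 - nep β k) * (s * ((1 - nep β k / 2) * nX β c k ^ 2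
          + (1 + nep β k / 2) * nY β c s k ^ 2) + nep β k * c * nX β c k * nY β c s k)
        + (2 * nep β k ^ 2 + 2 * (nep β k - nep β (k + 1)))
          * (nX β c k ^ 2 + nY β c s k ^ 2) := by
        convert hcore using 2 <;> ring
    _ = _ := by ring

lemma coerc {e X Y : ℝ} (hc : 0 ≤ c) (hc1 : c ≤ 1) (hs : 0 ≤ s) (hs1 : s ≤ 1)
    (he0 : 0 ≤ e) (he : e ≤ s / 4) :
    3 / 4 * s * (X ^ 2 + Y ^ 2)
      ≤ s * ((1 - e / 2) * X ^ 2 + (1 + e / 2) * Y ^ 2) + e * c * X * Y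
    ∧ s * ((1 - e / 2) * X ^ 2 + (1 + e / 2) * Y ^ 2) + e * c * X * Y
      ≤ 5 / 4 * s * (X ^ 2 + Y ^ 2) := by
  have hec : e * c ≤ s / 4 := by nlinarith
  have hec0 : 0 ≤ e * c := mul_nonneg he0 hc
  have hes : e * s ≤ s * s / 4 := by nlinarith
  have hss : s * s ≤ s := by nlinarith
  constructor
  · nlinarith [mul_nonneg hs (sq_nonneg (X + Y)), mul_nonneg hs (sq_nonneg (X - Y)),
      mul_nonneg hec0 (sq_nonneg (X + Y)), mul_nonneg hec0 (sq_nonneg (X - Y)),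
      mul_nonneg (sub_nonneg.mpr hec) (sq_nonneg (X + Y)),
      mul_nonneg (sub_nonneg.mpr hec) (sq_nonneg (X - Y)),
      mul_nonneg hs (sq_nonneg X), mul_nonneg hs (sq_nonneg Y),
      mul_nonneg (mul_nonneg he0 hs) (sq_nonneg X), mul_nonneg (mul_nonneg he0 hs) (sq_nonneg Y)]
  · nlinarith [mul_nonneg hs (sq_nonneg (X + Y)), mul_nonneg hs (sq_nonneg (X - Y)),
      mul_nonneg hec0 (sq_nonneg (X + Y)), mul_nonneg hec0 (sq_nonneg (X - Y)),
      mul_nonneg (sub_nonneg.mpr hec) (sq_nonneg (X + Y)),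
      mul_nonneg (sub_nonneg.mpr hec) (sq_nonneg (X - Y)),
      mul_nonneg hs (sq_nonneg X), mul_nonneg hs (sq_nonneg Y),
      mul_nonneg (mul_nonneg he0 hs) (sq_nonneg X), mul_nonneg (mul_nonneg he0 hs) (sq_nonneg Y)]

lemma nE_nonneg (hcs : c ^ 2 + s ^ 2 = 1) (j : ℕ) : 0 ≤ nE β c j := by
  rw [nE_eq_XY (s := s) hcs]; positivity

end Emach

/-! Auxiliary real inequalities -/

lemma exp_le_mul_exp_sq {t : ℝ} (ht : 0 ≤ t) :
    Real.exp t ≤ (1 + t) * Real.exp (t ^ 2) := by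
  have h1 : 1 - t + t ^ 2 ≤ Real.exp (t ^ 2 - t) := by
    have := Real.add_one_le_exp (t ^ 2 - t); linarith
  have h3 : Real.exp t * (1 - t + t ^ 2) ≤ Real.exp (t ^ 2) := by
    calc Real.exp t * (1 - t + t ^ 2) ≤ Real.exp t * Real.exp (t ^ 2 - t) :=
          mul_le_mul_of_nonneg_left h1 (Real.exp_pos t).le
      _ = Real.exp (t ^ 2) := by rw [← Real.exp_add]; ring_nf
  have h4 : (1 : ℝ) ≤ (1 + t) * (1 - t + t ^ 2) := by nlinarith [pow_nonneg ht 3]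
  calc Real.exp t = Real.exp t * 1 := by ring
    _ ≤ Real.exp t * ((1 + t) * (1 - t + t ^ 2)) :=
        mul_le_mul_of_nonneg_left h4 (Real.exp_pos t).le
    _ = (1 + t) * (Real.exp t * (1 - t + t ^ 2)) := by ring
    _ ≤ (1 + t) * Real.exp (t ^ 2) := mul_le_mul_of_nonneg_left h3 (by linarith)

lemma rpow_one_add_le {x p : ℝ} (hx : 0 ≤ x) (hp : 0 ≤ p) :
    (1 + x) ^ p ≤ Real.exp (p * x) := by
  have h1 : (0 : ℝ) < 1 + x := by linarith
  rw [Real.rpow_def_of_pos h1]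
  have h2 : Real.log (1 + x) ≤ x := by
    have := Real.log_le_sub_one_of_pos h1; linarith
  exact Real.exp_le_exp.mpr (by nlinarith [Real.log_nonneg (by linarith : (1:ℝ) ≤ 1 + x)])

section Decay
variable {β c s : ℝ} {k₀ : ℕ}

/-- summable error terms -/
noncomputable def mstep (β s : ℝ) (j : ℕ) : ℝ :=
  16 / (3 * s) * (nep β j ^ 2 + (nep β j - nep β (j + 1)))

variable (hβ : -1 < β) (hc : 0 ≤ c) (hc1 : c ≤ 1) (hs : 0 < s) (hs1 : s ≤ 1)
  (hcs : c ^ 2 + s ^ 2 = 1) (hk₀2 : 2 ≤ k₀) (hk₀s : 4 * (β + 1) ≤ (k₀ : ℝ) * s)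

include hβ hs hk₀2 hk₀s

lemma nep_small : ∀ j : ℕ, k₀ ≤ j → nep β j ≤ s / 4 := by
  intro j hj
  have hb1 : (0:ℝ) < β + 1 := by linarith
  have hkj : (k₀ : ℝ) ≤ (j : ℝ) := Nat.cast_le.mpr hj
  have hden : (0:ℝ) < (j : ℝ) + 1 + β := nep_den_pos hβ j
  have h1 : 4 * (β + 1) ≤ ((j : ℝ) + 1 + β) * s := by
    nlinarith [mul_le_mul_of_nonneg_right hkj hs.le]
  rw [nep, div_le_div_iff₀ hden (by norm_num : (0:ℝ) < 4)]
  linarith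

include hc hc1 hs1 hcs

lemma nG_lower : ∀ j : ℕ, k₀ ≤ j → 3 / 4 * s * nE β c j ≤ nG β c s j := by
  intro j hj
  have h := (coerc (c := c) (s := s) (e := nep β j) (X := nX β c j) (Y := nY β c s j)
    hc hc1 hs.le hs1 (nep_pos hβ j).le (nep_small hβ hs hk₀2 hk₀s j hj)).1
  rw [nG, nE_eq_XY (s := s) hcs]
  exact h

lemma nG_upper : ∀ j : ℕ, k₀ ≤ j → nG β c s j ≤ 5 / 4 * s * nE β c j := by
  intro j hj
  have h := (coerc (c := c) (s := s) (e := nep β j) (X := nX β c j) (Y := nY β c s j)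
    hc hc1 hs.le hs1 (nep_pos hβ j).le (nep_small hβ hs hk₀2 hk₀s j hj)).2
  rw [nG, nE_eq_XY (s := s) hcs]
  exact h

lemma nG_nonneg : ∀ j : ℕ, k₀ ≤ j → 0 ≤ nG β c s j := fun j hj =>
  le_trans (mul_nonneg (mul_nonneg (by norm_num) hs.le) (nE_nonneg (s := s) hcs j))
    (nG_lower hβ hc hc1 hs hs1 hcs hk₀2 hk₀s j hj)

lemma nG_one_step : ∀ j : ℕ, k₀ ≤ j →
    nG β c s (j + 1) ≤ ((1 - nep β j) * Real.exp (mstep β s j)) * nG β c s j := by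
  intro j hj
  have hG := nG_step hβ hc hc1 hs.le hs1 hcs (k := j)
  have hs3 : (0:ℝ) < 3 * s := by linarith
  have hE : nE β c j ≤ 4 / (3 * s) * nG β c s j := by
    have h := nG_lower hβ hc hc1 hs hs1 hcs hk₀2 hk₀s j hj
    rw [div_mul_eq_mul_div, le_div_iff₀ hs3]
    nlinarith [h]
  have heps := nep_pos hβ j
  have heps1 := nep_small hβ hs hk₀2 hk₀s j hj
  have hd0 : 0 ≤ nep β j - nep β (j + 1) := sub_nonneg.mpr (nep_anti hβ j)
  have hGnn := nG_nonneg hβ hc hc1 hs hs1 hcs hk₀2 hk₀s j hj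
  have hcoef : 0 ≤ 2 * nep β j ^ 2 + 2 * (nep β j - nep β (j + 1)) := by
    nlinarith [sq_nonneg (nep β j)]
  have hm0 : 0 ≤ mstep β s j := by
    apply mul_nonneg (by positivity)
    nlinarith [sq_nonneg (nep β j)]
  have h2 : (2 * nep β j ^ 2 + 2 * (nep β j - nep β (j + 1))) * nE β c j
      ≤ mstep β s j / 2 * nG β c s j := by
    calc (2 * nep β j ^ 2 + 2 * (nep β j - nep β (j + 1))) * nE β c j
        ≤ (2 * nep β j ^ 2 + 2 * (nep β j - nep β (j + 1))) * (4 / (3 * s) * nG β c s j) :=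
          mul_le_mul_of_nonneg_left hE hcoef
      _ = mstep β s j / 2 * nG β c s j := by
          unfold mstep
          field_simp
          ring
  have h3 : (1 - nep β j) + mstep β s j / 2 ≤ (1 - nep β j) * (1 + mstep β s j) := by
    nlinarith [mul_nonneg hm0 heps.le, hs1, heps1]
  have h4 : (1 - nep β j) * (1 + mstep β s j) ≤ (1 - nep β j) * Real.exp (mstep β s j) := by
    apply mul_le_mul_of_nonneg_left _ (by nlinarith [nep_le_one hβ j] : (0:ℝ) ≤ 1 - nep β j)
    have := Real.add_one_le_exp (mstep β s j); linarith
  calc nG β c s (j + 1)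
      ≤ (1 - nep β j) * nG β c s j
        + (2 * nep β j ^ 2 + 2 * (nep β j - nep β (j + 1))) * nE β c j := hG
    _ ≤ (1 - nep β j) * nG β c s j + mstep β s j / 2 * nG β c s j := by linarith
    _ = ((1 - nep β j) + mstep β s j / 2) * nG β c s j := by ring
    _ ≤ ((1 - nep β j) * Real.exp (mstep β s j)) * nG β c s j :=
        mul_le_mul_of_nonneg_right (h3.trans h4) hGnn
end Decay

section Decay2
open Finset
variable {β c s : ℝ} {k₀ : ℕ}
variable (hβ : -1 < β) (hc : 0 ≤ c) (hc1 : c ≤ 1) (hs : 0 < s) (hs1 : s ≤ 1)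
  (hcs : c ^ 2 + s ^ 2 = 1) (hk₀2 : 2 ≤ k₀) (hk₀s : 4 * (β + 1) ≤ (k₀ : ℝ) * s)

include hβ hc hc1 hs hs1 hcs hk₀2 hk₀s in
lemma nG_prod : ∀ k, k₀ ≤ k →
    nG β c s k ≤ (∏ j ∈ Ico k₀ k, ((1 - nep β j) * Real.exp (mstep β s j))) * nG β c s k₀ := by
  intro k hk
  induction k, hk using Nat.le_induction with
  | base => simp
  | succ k hk ih =>
    have hfac : 0 ≤ (1 - nep β k) * Real.exp (mstep β s k) :=
      mul_nonneg (by linarith [nep_le_one hβ k]) (Real.exp_pos _).le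
    calc nG β c s (k + 1)
        ≤ ((1 - nep β k) * Real.exp (mstep β s k)) * nG β c s k :=
          nG_one_step hβ hc hc1 hs hs1 hcs hk₀2 hk₀s k hk
      _ ≤ ((1 - nep β k) * Real.exp (mstep β s k))
          * ((∏ j ∈ Ico k₀ k, ((1 - nep β j) * Real.exp (mstep β s j))) * nG β c s k₀) :=
          mul_le_mul_of_nonneg_left ih hfac
      _ = (∏ j ∈ Ico k₀ (k + 1), ((1 - nep β j) * Real.exp (mstep β s j))) * nG β c s k₀ := by
          rw [Finset.prod_Ico_succ_top hk]; ring

include hβ hk₀2 in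
lemma sum_nep_sq : ∀ k, k₀ ≤ k →
    ∑ j ∈ Ico k₀ k, nep β j ^ 2
      ≤ (β + 1) ^ 2 * (((k₀ : ℝ) + β)⁻¹ - ((k : ℝ) + β)⁻¹) := by
  intro k hk
  induction k, hk using Nat.le_induction with
  | base => simp
  | succ k hk ih =>
    rw [Finset.sum_Ico_succ_top hk]
    have hk2 : (2:ℝ) ≤ (k:ℝ) := by
      have : (2:ℝ) ≤ (k₀:ℝ) := by exact_mod_cast hk₀2
      have : (k₀:ℝ) ≤ (k:ℝ) := Nat.cast_le.mpr hk
      linarith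
    have h1 : (0:ℝ) < (k:ℝ) + β := by linarith
    have h2 : (0:ℝ) < (k:ℝ) + 1 + β := by linarith
    have hstep : nep β k ^ 2 ≤ (β + 1) ^ 2 * (((k : ℝ) + β)⁻¹ - (((k:ℝ) + 1) + β)⁻¹) := by
      rw [nep]
      rw [div_pow]
      have hrw : ((k : ℝ) + β)⁻¹ - (((k:ℝ) + 1) + β)⁻¹ = (((k:ℝ) + β) * ((k:ℝ) + 1 + β))⁻¹ := by
        rw [inv_sub_inv (ne_of_gt h1) (ne_of_gt h2)]
        ring_nf
      rw [hrw]
      rw [div_eq_mul_inv]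
      apply mul_le_mul_of_nonneg_left _ (sq_nonneg (β + 1))
      apply inv_anti₀ (by positivity)
      nlinarith
    have hcast : ((k + 1 : ℕ) : ℝ) = (k : ℝ) + 1 := by push_cast; ring
    rw [hcast]
    linarith

include hβ in
lemma sum_nep_diff : ∀ k, k₀ ≤ k →
    ∑ j ∈ Ico k₀ k, (nep β j - nep β (j + 1)) = nep β k₀ - nep β k := by
  intro k hk
  induction k, hk using Nat.le_induction with
  | base => simp
  | succ k hk ih => rw [Finset.sum_Ico_succ_top hk, ih]; ring

include hβ hs hs1 hk₀2 hk₀s in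
lemma sum_mstep_le : ∀ k, k₀ ≤ k →
    ∑ j ∈ Ico k₀ k, mstep β s j ≤ 16 / 3 * ((β + 1) / 2 + 1 / 4) := by
  intro k hk
  have hk₀R : (2:ℝ) ≤ (k₀:ℝ) := by exact_mod_cast hk₀2
  have hb1 : (0:ℝ) < β + 1 := by linarith
  have hsum : ∑ j ∈ Ico k₀ k, mstep β s j
      = 16 / (3 * s) * (∑ j ∈ Ico k₀ k, (nep β j ^ 2 + (nep β j - nep β (j + 1)))) := by
    rw [Finset.mul_sum]
    exact Finset.sum_congr rfl (fun j _ => rfl)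
  rw [hsum, Finset.sum_add_distrib, mul_add]
  have hA : ∑ j ∈ Ico k₀ k, nep β j ^ 2 ≤ (β + 1) * s / 2 := by
    have h1 := sum_nep_sq hβ hk₀2 k hk
    have hkβ : (0:ℝ) < (k:ℝ) + β := by
      have : (k₀:ℝ) ≤ (k:ℝ) := Nat.cast_le.mpr hk
      linarith
    have h2 : ((k:ℝ) + β)⁻¹ ≥ 0 := by positivity
    have h3 : (β + 1) ^ 2 * ((k₀:ℝ) + β)⁻¹ ≤ (β + 1) * s / 2 := by
      have hden : (0:ℝ) < (k₀:ℝ) + β := by linarith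
      rw [mul_inv_le_iff₀ hden]
      -- (β+1)^2 ≤ (β+1) s/2 * (k₀+β); since k₀+β ≥ k₀-1 ≥ k₀/2 and k₀ s ≥ 4(β+1)
      have h5 : (k₀:ℝ) / 2 ≤ (k₀:ℝ) + β := by linarith
      have h6 : 4 * (β + 1) / s ≤ (k₀:ℝ) := by
        rw [div_le_iff₀ hs]; linarith
      have h7 : 2 * (β + 1) / s ≤ (k₀:ℝ) + β := by
        calc 2 * (β + 1) / s = (4 * (β + 1) / s) / 2 := by ring
          _ ≤ (k₀:ℝ) / 2 := by linarith
          _ ≤ (k₀:ℝ) + β := h5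
      calc (β + 1) ^ 2 = (β + 1) * s / 2 * (2 * (β + 1) / s) := by
            field_simp
        _ ≤ (β + 1) * s / 2 * ((k₀:ℝ) + β) := by
            apply mul_le_mul_of_nonneg_left h7 (by positivity)
    nlinarith [h1, h2, h3, sq_nonneg (β+1)]
  have hB : ∑ j ∈ Ico k₀ k, (nep β j - nep β (j + 1)) ≤ s / 4 := by
    rw [sum_nep_diff hβ k hk]
    have h1 := nep_small (k₀ := k₀) hβ hs hk₀2 hk₀s k₀ le_rfl
    have h2 := nep_pos hβ k
    linarith
  have hfrac : (0:ℝ) < 16 / (3 * s) := by positivity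
  calc 16 / (3 * s) * (∑ j ∈ Ico k₀ k, nep β j ^ 2)
        + 16 / (3 * s) * (∑ j ∈ Ico k₀ k, (nep β j - nep β (j + 1)))
      ≤ 16 / (3 * s) * ((β + 1) * s / 2) + 16 / (3 * s) * (s / 4) := by
        have := mul_le_mul_of_nonneg_left hA hfrac.le
        have := mul_le_mul_of_nonneg_left hB hfrac.le
        linarith
    _ = 16 / 3 * ((β + 1) / 2) + 16 / 3 * (1 / 4) := by
        field_simp
    _ = 16 / 3 * ((β + 1) / 2 + 1 / 4) := by ring

include hk₀2 in
lemma sum_inv_sq : ∀ k, k₀ ≤ k →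
    ∑ j ∈ Ico k₀ k, ((j:ℝ) ^ 2)⁻¹ ≤ ((k₀ : ℝ) - 1)⁻¹ - ((k : ℝ) - 1)⁻¹ := by
  intro k hk
  induction k, hk using Nat.le_induction with
  | base => simp
  | succ k hk ih =>
    rw [Finset.sum_Ico_succ_top hk]
    have hk2 : (2:ℝ) ≤ (k:ℝ) := by
      have h1 : (2:ℝ) ≤ (k₀:ℝ) := by exact_mod_cast hk₀2
      have h2 : (k₀:ℝ) ≤ (k:ℝ) := Nat.cast_le.mpr hk
      linarith
    have hstep : ((k:ℝ) ^ 2)⁻¹ ≤ ((k:ℝ) - 1)⁻¹ - (((k:ℝ) + 1) - 1)⁻¹ := by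
      have h1 : (0:ℝ) < (k:ℝ) - 1 := by linarith
      have h2 : (0:ℝ) < (k:ℝ) := by linarith
      rw [show ((k:ℝ) + 1) - 1 = (k:ℝ) by ring, inv_sub_inv (ne_of_gt h1) (ne_of_gt h2)]
      rw [show (k:ℝ) - ((k:ℝ) - 1) = 1 by ring]
      rw [one_div]
      apply inv_anti₀ (by positivity)
      nlinarith
    have hcast : ((k + 1 : ℕ) : ℝ) = (k : ℝ) + 1 := by push_cast; ring
    rw [hcast]
    linarith

end Decay2

section Decay3
open Finset
variable {β c s : ℝ} {k₀ : ℕ}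
variable (hβ : -1 < β) (hc : 0 ≤ c) (hc1 : c ≤ 1) (hs : 0 < s) (hs1 : s ≤ 1)
  (hcs : c ^ 2 + s ^ 2 = 1) (hk₀2 : 2 ≤ k₀) (hk₀s : 4 * (β + 1) ≤ (k₀ : ℝ) * s)

lemma rpow_succ_aux {p : ℝ} (hp : 0 ≤ p) (k : ℕ) (hk : (1:ℝ) ≤ (k:ℝ)) :
    ((k:ℝ) + 1) ^ p ≤ (k:ℝ) ^ p * (1 + p / (k:ℝ)) * Real.exp (p ^ 2 * ((k:ℝ) ^ 2)⁻¹) := by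
  have hk0 : (0:ℝ) < (k:ℝ) := by linarith
  have h1 : ((k:ℝ) + 1) = (k:ℝ) * (1 + 1 / (k:ℝ)) := by field_simp
  have h2 : ((k:ℝ) + 1) ^ p = (k:ℝ) ^ p * (1 + 1 / (k:ℝ)) ^ p := by
    rw [h1, Real.mul_rpow hk0.le (by positivity)]
  rw [h2]
  have h3 : (1 + 1 / (k:ℝ)) ^ p ≤ Real.exp (p * (1 / (k:ℝ))) :=
    rpow_one_add_le (by positivity) hp
  have h4 : Real.exp (p * (1 / (k:ℝ))) ≤ (1 + p / (k:ℝ)) * Real.exp ((p / (k:ℝ)) ^ 2) := by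
    have := exp_le_mul_exp_sq (t := p / (k:ℝ)) (by positivity)
    rw [mul_one_div]
    convert this using 3 <;> ring
  have h5 : (p / (k:ℝ)) ^ 2 = p ^ 2 * ((k:ℝ) ^ 2)⁻¹ := by
    rw [div_pow]; ring
  rw [h5] at h4
  calc (k:ℝ) ^ p * (1 + 1 / (k:ℝ)) ^ p
      ≤ (k:ℝ) ^ p * ((1 + p / (k:ℝ)) * Real.exp (p ^ 2 * ((k:ℝ) ^ 2)⁻¹)) := by
        apply mul_le_mul_of_nonneg_left (h3.trans h4) (Real.rpow_nonneg hk0.le p)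
    _ = (k:ℝ) ^ p * (1 + p / (k:ℝ)) * Real.exp (p ^ 2 * ((k:ℝ) ^ 2)⁻¹) := by ring

include hβ hk₀2 in
lemma prod_eps_rpow : ∀ k, k₀ ≤ k →
    (∏ j ∈ Ico k₀ k, (1 - nep β j)) * (k:ℝ) ^ (β + 1)
      ≤ (k₀:ℝ) ^ (β + 1) * Real.exp ((β + 1) ^ 2 * ∑ j ∈ Ico k₀ k, ((j:ℝ) ^ 2)⁻¹) := by
  intro k hk
  have hp : (0:ℝ) ≤ β + 1 := by linarith
  induction k, hk using Nat.le_induction with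
  | base => simp
  | succ k hk ih =>
    have hk1 : (1:ℝ) ≤ (k:ℝ) := by
      have h1 : (2:ℝ) ≤ (k₀:ℝ) := by exact_mod_cast hk₀2
      have h2 : (k₀:ℝ) ≤ (k:ℝ) := Nat.cast_le.mpr hk
      linarith
    have hk0 : (0:ℝ) < (k:ℝ) := by linarith
    have hden : (0:ℝ) < (k:ℝ) + 1 + β := nep_den_pos hβ k
    have hone : (1 - nep β k) * (1 + (β + 1) / (k:ℝ)) = 1 := by
      rw [nep]; field_simp; ring
    have hprodnn : (0:ℝ) ≤ ∏ j ∈ Ico k₀ k, (1 - nep β j) :=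
      Finset.prod_nonneg fun j _ => by linarith [nep_le_one hβ j]
    have hnn2 : (0:ℝ) ≤ (∏ j ∈ Ico k₀ k, (1 - nep β j)) * (1 - nep β k) :=
      mul_nonneg hprodnn (by linarith [nep_le_one hβ k])
    have hcast : ((k + 1 : ℕ) : ℝ) = (k : ℝ) + 1 := by push_cast; ring
    rw [Finset.prod_Ico_succ_top hk, Finset.sum_Ico_succ_top hk, hcast]
    have hstep := rpow_succ_aux hp k hk1
    calc (∏ j ∈ Ico k₀ k, (1 - nep β j)) * (1 - nep β k) * ((k:ℝ) + 1) ^ (β + 1)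
        ≤ (∏ j ∈ Ico k₀ k, (1 - nep β j)) * (1 - nep β k)
            * ((k:ℝ) ^ (β + 1) * (1 + (β + 1) / (k:ℝ))
              * Real.exp ((β + 1) ^ 2 * ((k:ℝ) ^ 2)⁻¹)) :=
          mul_le_mul_of_nonneg_left hstep hnn2
      _ = ((∏ j ∈ Ico k₀ k, (1 - nep β j)) * (k:ℝ) ^ (β + 1))
            * (((1 - nep β k) * (1 + (β + 1) / (k:ℝ)))
              * Real.exp ((β + 1) ^ 2 * ((k:ℝ) ^ 2)⁻¹)) := by ring
      _ = ((∏ j ∈ Ico k₀ k, (1 - nep β j)) * (k:ℝ) ^ (β + 1))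
            * Real.exp ((β + 1) ^ 2 * ((k:ℝ) ^ 2)⁻¹) := by rw [hone, one_mul]
      _ ≤ ((k₀:ℝ) ^ (β + 1) * Real.exp ((β + 1) ^ 2 * ∑ j ∈ Ico k₀ k, ((j:ℝ) ^ 2)⁻¹))
            * Real.exp ((β + 1) ^ 2 * ((k:ℝ) ^ 2)⁻¹) :=
          mul_le_mul_of_nonneg_right ih (Real.exp_pos _).le
      _ = (k₀:ℝ) ^ (β + 1)
            * Real.exp ((β + 1) ^ 2 * (∑ j ∈ Ico k₀ k, ((j:ℝ) ^ 2)⁻¹ + ((k:ℝ) ^ 2)⁻¹)) := by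
          rw [mul_add, Real.exp_add]; ring

include hβ hs hs1 hk₀2 hk₀s in
lemma prod_eps_le : ∀ k, k₀ ≤ k →
    (∏ j ∈ Ico k₀ k, (1 - nep β j))
      ≤ Real.exp ((β + 1) / 2) * ((k₀:ℝ) ^ (β + 1) * (((k:ℝ) ^ (β + 1))⁻¹)) := by
  intro k hk
  have hk₀R : (2:ℝ) ≤ (k₀:ℝ) := by exact_mod_cast hk₀2
  have hkR : (k₀:ℝ) ≤ (k:ℝ) := Nat.cast_le.mpr hk
  have hb1 : (0:ℝ) < β + 1 := by linarith
  have hS : (β + 1) ^ 2 * ∑ j ∈ Ico k₀ k, ((j:ℝ) ^ 2)⁻¹ ≤ (β + 1) / 2 := by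
    have h1 := sum_inv_sq hk₀2 k hk
    have h2 : (0:ℝ) < (k₀:ℝ) - 1 := by linarith
    have h3 : ((k:ℝ) - 1)⁻¹ ≥ 0 := by
      have : (0:ℝ) < (k:ℝ) - 1 := by linarith
      positivity
    have h4 : ∑ j ∈ Ico k₀ k, ((j:ℝ) ^ 2)⁻¹ ≤ ((k₀:ℝ) - 1)⁻¹ := by linarith
    have h6 : 4 * (β + 1) ≤ (k₀:ℝ) := by nlinarith
    have h7 : 2 * (β + 1) ≤ (k₀:ℝ) - 1 := by linarith
    have h8 : ((k₀:ℝ) - 1)⁻¹ ≤ (2 * (β + 1))⁻¹ := by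
      apply inv_anti₀ (by positivity) h7
    have h9 : (β + 1) ^ 2 * (2 * (β + 1))⁻¹ = (β + 1) / 2 := by
      field_simp
    have hsumnn : (0:ℝ) ≤ ∑ j ∈ Ico k₀ k, ((j:ℝ) ^ 2)⁻¹ :=
      Finset.sum_nonneg fun j _ => by positivity
    calc (β + 1) ^ 2 * ∑ j ∈ Ico k₀ k, ((j:ℝ) ^ 2)⁻¹
        ≤ (β + 1) ^ 2 * (2 * (β + 1))⁻¹ := by
          apply mul_le_mul_of_nonneg_left _ (sq_nonneg _)
          linarith
      _ = (β + 1) / 2 := h9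
  have hmain := prod_eps_rpow hβ hk₀2 k hk
  have hkpos : (0:ℝ) < (k:ℝ) := by linarith
  have hkp : (0:ℝ) < (k:ℝ) ^ (β + 1) := Real.rpow_pos_of_pos hkpos _
  have hexp : Real.exp ((β + 1) ^ 2 * ∑ j ∈ Ico k₀ k, ((j:ℝ) ^ 2)⁻¹)
      ≤ Real.exp ((β + 1) / 2) := Real.exp_le_exp.mpr hS
  have hk₀p : (0:ℝ) ≤ (k₀:ℝ) ^ (β + 1) := Real.rpow_nonneg (by linarith) _
  rw [← le_div_iff₀ hkp] at hmain
  calc (∏ j ∈ Ico k₀ k, (1 - nep β j))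
      ≤ (k₀:ℝ) ^ (β + 1) * Real.exp ((β + 1) ^ 2 * ∑ j ∈ Ico k₀ k, ((j:ℝ) ^ 2)⁻¹)
          / (k:ℝ) ^ (β + 1) := hmain
    _ ≤ (k₀:ℝ) ^ (β + 1) * Real.exp ((β + 1) / 2) / (k:ℝ) ^ (β + 1) := by
        gcongr
    _ = Real.exp ((β + 1) / 2) * ((k₀:ℝ) ^ (β + 1) * (((k:ℝ) ^ (β + 1))⁻¹)) := by
        field_simp

include hβ hc hc1 hs hs1 hcs hk₀2 hk₀s in
lemma nE_decay_aux : ∀ k, k₀ ≤ k →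
    nE β c k ≤ 5 / 3 * Real.exp (16 / 3 * ((β + 1) / 2 + 1 / 4) + (β + 1) / 2)
      * ((k₀:ℝ) ^ (β + 1) * (((k:ℝ) ^ (β + 1))⁻¹)) * (1 - c ^ 2) := by
  intro k hk
  have hGk := nG_prod hβ hc hc1 hs hs1 hcs hk₀2 hk₀s k hk
  have hprodsplit : (∏ j ∈ Ico k₀ k, ((1 - nep β j) * Real.exp (mstep β s j)))
      = (∏ j ∈ Ico k₀ k, (1 - nep β j)) * Real.exp (∑ j ∈ Ico k₀ k, mstep β s j) := by
    rw [Finset.prod_mul_distrib, Real.exp_sum]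
  have hprodnn : (0:ℝ) ≤ ∏ j ∈ Ico k₀ k, (1 - nep β j) :=
    Finset.prod_nonneg fun j _ => by linarith [nep_le_one hβ j]
  have hGk₀nn : (0:ℝ) ≤ nG β c s k₀ := nG_nonneg hβ hc hc1 hs hs1 hcs hk₀2 hk₀s k₀ le_rfl
  have hexpm : Real.exp (∑ j ∈ Ico k₀ k, mstep β s j)
      ≤ Real.exp (16 / 3 * ((β + 1) / 2 + 1 / 4)) :=
    Real.exp_le_exp.mpr (sum_mstep_le hβ hs hs1 hk₀2 hk₀s k hk)
  have hGk₀ : nG β c s k₀ ≤ 5 / 4 * s * (1 - c ^ 2) := by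
    have h1 := nG_upper hβ hc hc1 hs hs1 hcs hk₀2 hk₀s k₀ le_rfl
    have h2 := nE_le (c := c) hβ k₀
    nlinarith [hs.le]
  have hEnn := nE_nonneg (β := β) (c := c) (s := s) hcs
  have hElow : 3 / 4 * s * nE β c k ≤ nG β c s k :=
    nG_lower hβ hc hc1 hs hs1 hcs hk₀2 hk₀s k hk
  have hPle := prod_eps_le hβ hs hs1 hk₀2 hk₀s k hk
  -- abbreviations
  set P : ℝ := ∏ j ∈ Ico k₀ k, (1 - nep β j) with hP
  set Q : ℝ := Real.exp (16 / 3 * ((β + 1) / 2 + 1 / 4)) with hQ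
  set R : ℝ := Real.exp ((β + 1) / 2) * ((k₀:ℝ) ^ (β + 1) * (((k:ℝ) ^ (β + 1))⁻¹)) with hR
  have hQ0 : 0 < Q := Real.exp_pos _
  have hR0 : 0 ≤ R := by
    have hkpos : (0:ℝ) < (k:ℝ) := by
      have h1 : (2:ℝ) ≤ (k₀:ℝ) := by exact_mod_cast hk₀2
      have h2 : (k₀:ℝ) ≤ (k:ℝ) := Nat.cast_le.mpr hk
      linarith
    have := Real.rpow_pos_of_pos hkpos (β + 1)
    have h3 : (0:ℝ) ≤ (k₀:ℝ) ^ (β + 1) := Real.rpow_nonneg (by positivity) _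
    positivity
  have hchain : nG β c s k ≤ R * Q * (5 / 4 * s * (1 - c ^ 2)) := by
    have hcc : (0:ℝ) ≤ 1 - c ^ 2 := by nlinarith
    calc nG β c s k ≤ (P * Real.exp (∑ j ∈ Ico k₀ k, mstep β s j)) * nG β c s k₀ := by
          rw [← hprodsplit]; exact hGk
      _ ≤ (P * Q) * nG β c s k₀ := by
          apply mul_le_mul_of_nonneg_right _ hGk₀nn
          exact mul_le_mul_of_nonneg_left hexpm hprodnn
      _ ≤ (R * Q) * nG β c s k₀ := by
          apply mul_le_mul_of_nonneg_right _ hGk₀nn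
          exact mul_le_mul_of_nonneg_right hPle hQ0.le
      _ ≤ (R * Q) * (5 / 4 * s * (1 - c ^ 2)) := by
          apply mul_le_mul_of_nonneg_left hGk₀ (mul_nonneg hR0 hQ0.le)
      _ = R * Q * (5 / 4 * s * (1 - c ^ 2)) := by ring
  have hfinal : 3 / 4 * s * nE β c k ≤ R * Q * (5 / 4 * s * (1 - c ^ 2)) :=
    le_trans hElow hchain
  have hgoal : nE β c k ≤ 5 / 3 * Q * R * (1 - c ^ 2) := by
    have hs4 : (0:ℝ) < 3 / 4 * s := by linarith
    rw [show R * Q * (5 / 4 * s * (1 - c ^ 2)) = (3 / 4 * s) * (5 / 3 * Q * R * (1 - c ^ 2))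
      by ring] at hfinal
    exact le_of_mul_le_mul_left hfinal hs4
  calc nE β c k ≤ 5 / 3 * Q * R * (1 - c ^ 2) := hgoal
    _ = 5 / 3 * Real.exp (16 / 3 * ((β + 1) / 2 + 1 / 4) + (β + 1) / 2)
        * ((k₀:ℝ) ^ (β + 1) * (((k:ℝ) ^ (β + 1))⁻¹)) * (1 - c ^ 2) := by
        rw [hQ, hR, Real.exp_add]; ring

end Decay3

set_option maxHeartbeats 1000000 in
/-- Global energy decay bound, uniform in the spectral parameter. -/
lemma nE_decay (β : ℝ) (hβ : -1 < β) : ∃ C : ℝ, 0 < C ∧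
    ∀ c s : ℝ, 0 ≤ c → c ≤ 1 → 0 < s → s ≤ 1 → c ^ 2 + s ^ 2 = 1 →
      ∀ k : ℕ, 1 ≤ k →
        nE β c k ≤ C * (1 - c ^ 2) * ((((k:ℝ) * s) ^ (β + 1))⁻¹) := by
  obtain ⟨A, hA⟩ : ∃ a : ℝ, a = 16 / 3 * ((β + 1) / 2 + 1 / 4) + (β + 1) / 2 := ⟨_, rfl⟩
  refine ⟨(5 / 3 * Real.exp A + 1) * (4 * β + 7) ^ (β + 1), ?_, ?_⟩
  · have h1 : (0:ℝ) < (4 * β + 7) ^ (β + 1) := Real.rpow_pos_of_pos (by linarith) _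
    have h2 : (0:ℝ) < 5 / 3 * Real.exp A + 1 := by positivity
    positivity
  intro c s hc hc1 hs hs1 hcs k hk
  have hp : (0:ℝ) ≤ β + 1 := by linarith
  set k₀ : ℕ := max 2 ⌈4 * (β + 1) / s⌉₊ with hk₀def
  have hk₀2 : 2 ≤ k₀ := le_max_left _ _
  have hx0 : (0:ℝ) ≤ 4 * (β + 1) / s := by positivity
  have hk₀s : 4 * (β + 1) ≤ (k₀ : ℝ) * s := by
    have h1 : 4 * (β + 1) / s ≤ (⌈4 * (β + 1) / s⌉₊ : ℝ) := Nat.le_ceil _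
    have h2 : (⌈4 * (β + 1) / s⌉₊ : ℝ) ≤ (k₀ : ℝ) := Nat.cast_le.mpr (le_max_right _ _)
    rw [div_le_iff₀ hs] at h1
    nlinarith [mul_le_mul_of_nonneg_right h2 hs.le]
  have hk₀up : (k₀ : ℝ) * s ≤ 4 * β + 7 := by
    have h1 : (⌈4 * (β + 1) / s⌉₊ : ℝ) < 4 * (β + 1) / s + 1 := Nat.ceil_lt_add_one hx0
    have h2 : (k₀ : ℝ) ≤ 2 + (⌈4 * (β + 1) / s⌉₊ : ℝ) := by
      have : k₀ ≤ 2 + ⌈4 * (β + 1) / s⌉₊ := by rw [hk₀def]; omega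
      exact_mod_cast this
    have h3 : (k₀ : ℝ) ≤ 3 + 4 * (β + 1) / s := by linarith
    have h4 : (k₀ : ℝ) * s ≤ (3 + 4 * (β + 1) / s) * s :=
      mul_le_mul_of_nonneg_right h3 hs.le
    have h5 : (3 + 4 * (β + 1) / s) * s = 3 * s + 4 * (β + 1) := by field_simp
    nlinarith
  have hknn : (0:ℝ) < (k : ℝ) := by exact_mod_cast hk
  have hksnn : (0:ℝ) < (k : ℝ) * s := by positivity
  have hkspow : (0:ℝ) < ((k:ℝ) * s) ^ (β + 1) := Real.rpow_pos_of_pos hksnn _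
  have hccnn : (0:ℝ) ≤ 1 - c ^ 2 := by nlinarith
  have hk₀spow : ((k₀:ℝ) * s) ^ (β + 1) ≤ (4 * β + 7) ^ (β + 1) :=
    Real.rpow_le_rpow (by positivity) hk₀up hp
  rcases le_or_gt k₀ k with hcase | hcase
  · -- main regime
    have hmain := nE_decay_aux hβ hc hc1 hs hs1 hcs hk₀2 hk₀s k hcase
    rw [← hA] at hmain
    have hratio : (k₀:ℝ) ^ (β + 1) * (((k:ℝ) ^ (β + 1))⁻¹)
        = ((k₀:ℝ) * s) ^ (β + 1) * ((((k:ℝ) * s) ^ (β + 1))⁻¹) := by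
      rw [Real.mul_rpow (by positivity) hs.le, Real.mul_rpow (by positivity) hs.le]
      have hsp : (0:ℝ) < s ^ (β + 1) := Real.rpow_pos_of_pos hs _
      have hkp : (0:ℝ) < (k:ℝ) ^ (β + 1) := Real.rpow_pos_of_pos hknn _
      field_simp
    rw [hratio] at hmain
    calc nE β c k
        ≤ 5 / 3 * Real.exp A * (((k₀:ℝ) * s) ^ (β + 1) * ((((k:ℝ) * s) ^ (β + 1))⁻¹))
          * (1 - c ^ 2) := hmain
      _ ≤ 5 / 3 * Real.exp A * ((4 * β + 7) ^ (β + 1) * ((((k:ℝ) * s) ^ (β + 1))⁻¹))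
          * (1 - c ^ 2) := by
          have hE : (0:ℝ) ≤ 5 / 3 * Real.exp A := by positivity
          have hinv : (0:ℝ) ≤ (((k:ℝ) * s) ^ (β + 1))⁻¹ := by positivity
          apply mul_le_mul_of_nonneg_right _ hccnn
          apply mul_le_mul_of_nonneg_left _ hE
          exact mul_le_mul_of_nonneg_right hk₀spow hinv
      _ ≤ (5 / 3 * Real.exp A + 1) * (4 * β + 7) ^ (β + 1) * (1 - c ^ 2)
          * ((((k:ℝ) * s) ^ (β + 1))⁻¹) := by
          have h1 : (0:ℝ) ≤ (4 * β + 7) ^ (β + 1) := (Real.rpow_pos_of_pos (by linarith) _).le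
          have h2 : (0:ℝ) ≤ (((k:ℝ) * s) ^ (β + 1))⁻¹ := by positivity
          nlinarith [mul_nonneg (mul_nonneg h1 h2) hccnn]
  · -- initial regime : k < k₀
    have hE0 : nE β c k ≤ 1 - c ^ 2 := nE_le hβ k
    have hks : ((k:ℝ) * s) ^ (β + 1) ≤ ((k₀:ℝ) * s) ^ (β + 1) := by
      apply Real.rpow_le_rpow (by positivity) _ hp
      have : (k:ℝ) ≤ (k₀:ℝ) := Nat.cast_le.mpr hcase.le
      nlinarith
    have hone : (1:ℝ) ≤ (4 * β + 7) ^ (β + 1) * ((((k:ℝ) * s) ^ (β + 1))⁻¹) := by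
      have h2 : ((k:ℝ) * s) ^ (β + 1) ≤ (4 * β + 7) ^ (β + 1) := le_trans hks hk₀spow
      calc (1:ℝ) = ((k:ℝ) * s) ^ (β + 1) * ((((k:ℝ) * s) ^ (β + 1))⁻¹) := by
            field_simp
        _ ≤ (4 * β + 7) ^ (β + 1) * ((((k:ℝ) * s) ^ (β + 1))⁻¹) :=
            mul_le_mul_of_nonneg_right h2 (by positivity)
    calc nE β c k ≤ 1 - c ^ 2 := hE0
      _ = 1 * (1 - c ^ 2) := by ring
      _ ≤ ((4 * β + 7) ^ (β + 1) * ((((k:ℝ) * s) ^ (β + 1))⁻¹)) * (1 - c ^ 2) :=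
          mul_le_mul_of_nonneg_right hone hccnn
      _ ≤ (5 / 3 * Real.exp A + 1) * (4 * β + 7) ^ (β + 1) * (1 - c ^ 2)
          * ((((k:ℝ) * s) ^ (β + 1))⁻¹) := by
          have h1 : (0:ℝ) ≤ (4 * β + 7) ^ (β + 1) := (Real.rpow_pos_of_pos (by linarith) _).le
          have h2 : (0:ℝ) ≤ (((k:ℝ) * s) ^ (β + 1))⁻¹ := by positivity
          have h3 : (0:ℝ) ≤ 5 / 3 * Real.exp A := by positivity
          nlinarith [mul_nonneg (mul_nonneg (mul_nonneg h3 h1) hccnn) h2]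

lemma rpow_mul_exp_bound {ν : ℝ} (hν : 0 < ν) :
    ∀ y : ℝ, 0 ≤ y → y ^ ν * Real.exp (-(y / 2))
      ≤ (⌈ν⌉₊.factorial : ℝ) * 4 ^ ⌈ν⌉₊ + 1 := by
  intro y hy
  set n : ℕ := ⌈ν⌉₊ with hn
  have hfac : (1:ℝ) ≤ (n.factorial : ℝ) := by
    exact_mod_cast Nat.one_le_iff_ne_zero.mpr (Nat.factorial_ne_zero n)
  have h4 : (1:ℝ) ≤ 4 ^ n := one_le_pow₀ (by norm_num : (1:ℝ) ≤ 4)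
  have hM1 : (1:ℝ) ≤ (n.factorial : ℝ) * 4 ^ n := by nlinarith
  rcases le_or_gt y 1 with hy1 | hy1
  · have h1 : y ^ ν ≤ 1 := Real.rpow_le_one hy hy1 hν.le
    have h2 : Real.exp (-(y / 2)) ≤ 1 := Real.exp_le_one_iff.mpr (by linarith)
    have h3 : 0 ≤ y ^ ν := Real.rpow_nonneg hy _
    nlinarith [Real.exp_pos (-(y / 2))]
  · have hy0 : (1:ℝ) ≤ y := hy1.le
    have h1 : y ^ ν ≤ y ^ (n : ℝ) :=
      Real.rpow_le_rpow_of_exponent_le hy0 (Nat.le_ceil ν)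
    have h2 : y ^ (n : ℝ) = y ^ n := Real.rpow_natCast y n
    have h3 : (y / 4) ^ n / (n.factorial : ℝ) ≤ Real.exp (y / 4) :=
      Real.pow_div_factorial_le_exp (y / 4) (by linarith) n
    have h4' : y ^ n ≤ (n.factorial : ℝ) * 4 ^ n * Real.exp (y / 4) := by
      have hexp : (y / 4) ^ n = y ^ n / 4 ^ n := div_pow y 4 n
      rw [hexp] at h3
      have h40 : (0:ℝ) < 4 ^ n := by positivity
      have hf0 : (0:ℝ) < (n.factorial : ℝ) := by linarith
      rw [div_div, div_le_iff₀ (by positivity)] at h3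
      linarith [h3]
    have h5 : y ^ ν * Real.exp (-(y / 2))
        ≤ ((n.factorial : ℝ) * 4 ^ n * Real.exp (y / 4)) * Real.exp (-(y / 2)) := by
      apply mul_le_mul_of_nonneg_right _ (Real.exp_pos _).le
      calc y ^ ν ≤ y ^ (n:ℝ) := h1
        _ = y ^ n := h2
        _ ≤ _ := h4'
    have h6 : Real.exp (y / 4) * Real.exp (-(y / 2)) = Real.exp (-(y / 4)) := by
      rw [← Real.exp_add]; ring_nf
    have h7 : Real.exp (-(y / 4)) ≤ 1 := Real.exp_le_one_iff.mpr (by linarith)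
    calc y ^ ν * Real.exp (-(y / 2))
        ≤ ((n.factorial : ℝ) * 4 ^ n * Real.exp (y / 4)) * Real.exp (-(y / 2)) := h5
      _ = (n.factorial : ℝ) * 4 ^ n * (Real.exp (y / 4) * Real.exp (-(y / 2))) := by ring
      _ = (n.factorial : ℝ) * 4 ^ n * Real.exp (-(y / 4)) := by rw [h6]
      _ ≤ (n.factorial : ℝ) * 4 ^ n * 1 := by
          apply mul_le_mul_of_nonneg_left h7 (by positivity)
      _ ≤ (n.factorial : ℝ) * 4 ^ n + 1 := by linarith

set_option maxHeartbeats 1000000 in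
theorem nesterov_residual_decay_high (β : ℝ) (hβ : -1 < β) (μ : ℝ)
    (hμβ : (β + 1) / 4 < μ) :
    ∃ C : ℝ, 0 < C ∧ ∀ k : ℕ, 1 ≤ k → ∀ l ∈ Set.Icc (0 : ℝ) 1,
      |nesterovRes β k l| * l ^ μ ≤ C * (k : ℝ) ^ (-(μ + (β + 1) / 4)) := by
  obtain ⟨CE, hCE0, hCE⟩ := nE_decay β hβ
  have hp0 : (0:ℝ) < β + 1 := by linarith
  have hμ0 : 0 < μ := by linarith
  have hν : 0 < μ - (β + 1) / 4 := by linarith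
  obtain ⟨M, hMdef⟩ : ∃ m : ℝ,
      m = (⌈μ - (β + 1) / 4⌉₊.factorial : ℝ) * 4 ^ ⌈μ - (β + 1) / 4⌉₊ + 1 := ⟨_, rfl⟩
  have hM0 : 0 < M := by rw [hMdef]; positivity
  have hM : ∀ y : ℝ, 0 ≤ y → y ^ (μ - (β + 1) / 4) * Real.exp (-(y / 2)) ≤ M := by
    intro y hy; rw [hMdef]; exact rpow_mul_exp_bound hν y hy
  obtain ⟨D, hDdef⟩ : ∃ d : ℝ, d = Real.sqrt (2 * CE * 2 ^ (β + 1)) := ⟨_, rfl⟩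
  have h2p : (0:ℝ) < 2 ^ (β + 1) := Real.rpow_pos_of_pos (by norm_num) (β + 1)
  have hD0 : 0 < D := by
    rw [hDdef]; apply Real.sqrt_pos.mpr; positivity
  refine ⟨max 1 (D * M), lt_of_lt_of_le one_pos (le_max_left _ _), ?_⟩
  intro k hk l hl
  obtain ⟨hl0, hl1⟩ := hl
  have hknn : (0:ℝ) < (k:ℝ) := by exact_mod_cast hk
  have hkrp : (0:ℝ) < (k:ℝ) ^ (-(μ + (β + 1) / 4)) := Real.rpow_pos_of_pos hknn _
  rcases eq_or_lt_of_le hl0 with hl0' | hl0'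
  · -- l = 0
    rw [← hl0', Real.zero_rpow (ne_of_gt hμ0), mul_zero]
    positivity
  -- 0 < l
  obtain ⟨s, hsdef⟩ : ∃ x : ℝ, x = Real.sqrt l := ⟨_, rfl⟩
  obtain ⟨c, hcdef⟩ : ∃ x : ℝ, x = Real.sqrt (1 - l) := ⟨_, rfl⟩
  have hs0 : 0 < s := by rw [hsdef]; exact Real.sqrt_pos.mpr hl0'
  have hs1 : s ≤ 1 := by rw [hsdef]; exact Real.sqrt_le_one.mpr hl1
  have hc0 : 0 ≤ c := by rw [hcdef]; exact Real.sqrt_nonneg _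
  have hc1 : c ≤ 1 := by rw [hcdef]; exact Real.sqrt_le_one.mpr (by linarith)
  have hc2 : c ^ 2 = 1 - l := by rw [hcdef]; exact Real.sq_sqrt (by linarith)
  have hs2 : s ^ 2 = l := by rw [hsdef]; exact Real.sq_sqrt hl0
  have hcs : c ^ 2 + s ^ 2 = 1 := by rw [hc2, hs2]; ring
  have hres : nesterovRes β k l = c ^ k * nu β c k := by
    have h1 := res_eq_nu β c hβ k
    rw [show 1 - c ^ 2 = l by rw [hc2]; ring] at h1
    exact h1
  rcases Nat.lt_or_ge k 2 with hk2 | hk2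
  · -- k = 1
    have hk1 : k = 1 := by omega
    subst hk1
    have habs : |nesterovRes β 1 l| = 1 - l := by
      show |1 - l| = 1 - l
      exact abs_of_nonneg (by linarith)
    have hone : ((1:ℕ):ℝ) ^ (-(μ + (β + 1) / 4)) = 1 := by
      rw [Nat.cast_one, Real.one_rpow]
    rw [habs, hone, mul_one]
    have hlpow : l ^ μ ≤ 1 := Real.rpow_le_one hl0 hl1 hμ0.le
    have h2 : 0 ≤ l ^ μ := Real.rpow_nonneg hl0 μ
    have h1 : (1 - l) * l ^ μ ≤ 1 := by nlinarith
    exact h1.trans (le_max_left _ _)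
  -- main case : k ≥ 2
  obtain ⟨j, rfl⟩ : ∃ j, k = j + 1 := ⟨k - 1, by omega⟩
  have hj1 : 1 ≤ j := by omega
  have hjnn : (0:ℝ) < (j:ℝ) := by exact_mod_cast hj1
  have hK : ((j + 1 : ℕ) : ℝ) = (j:ℝ) + 1 := by push_cast; ring
  have hK0 : (0:ℝ) < (j:ℝ) + 1 := by linarith
  have hEj := hCE c s hc0 hc1 hs0 hs1 hcs j hj1
  rw [show 1 - c ^ 2 = l by rw [hc2]; ring] at hEj
  have hlow := nE_lower (β := β) (c := c) hc0 j
  have hcl : l / 2 ≤ 1 - c := by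
    nlinarith [sq_nonneg (c - (1 - l / 2)), hc2, hc0, hl1]
  have hjs0 : (0:ℝ) < (j:ℝ) * s := by positivity
  have hjsp : (0:ℝ) < ((j:ℝ) * s) ^ (β + 1) := Real.rpow_pos_of_pos hjs0 _
  have hu2 : nu β c (j + 1) ^ 2 ≤ 2 * CE * (((j:ℝ) * s) ^ (β + 1))⁻¹ := by
    have h1 : (l / 2) * nu β c (j + 1) ^ 2 ≤ CE * l * (((j:ℝ) * s) ^ (β + 1))⁻¹ := by
      have h2 : (l / 2) * nu β c (j + 1) ^ 2 ≤ (1 - c) * nu β c (j + 1) ^ 2 :=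
        mul_le_mul_of_nonneg_right hcl (sq_nonneg _)
      have h3 : (1 - c) * nu β c (j + 1) ^ 2
          ≤ (1 - c) * (nu β c (j + 1) ^ 2 + nu β c j ^ 2) := by
        have h4 : (0:ℝ) ≤ 1 - c := by linarith
        nlinarith [mul_nonneg h4 (sq_nonneg (nu β c j))]
      linarith [hlow, hEj]
    have h5 : nu β c (j + 1) ^ 2 = (2 / l) * ((l / 2) * nu β c (j + 1) ^ 2) := by
      field_simp
    rw [h5]
    calc (2 / l) * ((l / 2) * nu β c (j + 1) ^ 2)
        ≤ (2 / l) * (CE * l * (((j:ℝ) * s) ^ (β + 1))⁻¹) :=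
          mul_le_mul_of_nonneg_left h1 (by positivity)
      _ = 2 * CE * (((j:ℝ) * s) ^ (β + 1))⁻¹ := by field_simp
  have hKs0 : (0:ℝ) < ((j:ℝ) + 1) * s := by positivity
  have hKsp : (0:ℝ) < (((j:ℝ) + 1) * s) ^ (β + 1) := Real.rpow_pos_of_pos hKs0 _
  have hinvcomp : (((j:ℝ) * s) ^ (β + 1))⁻¹
      ≤ 2 ^ (β + 1) * ((((j:ℝ) + 1) * s) ^ (β + 1))⁻¹ := by
    have h1 : ((j:ℝ) + 1) * s / 2 ≤ (j:ℝ) * s := by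
      have h1' : (j:ℝ) + 1 ≤ 2 * (j:ℝ) := by
        have : (1:ℝ) ≤ (j:ℝ) := by exact_mod_cast hj1
        linarith
      nlinarith
    have h2 : (((j:ℝ) + 1) * s / 2) ^ (β + 1) ≤ ((j:ℝ) * s) ^ (β + 1) :=
      Real.rpow_le_rpow (by positivity) h1 hp0.le
    have h3 : (((j:ℝ) + 1) * s / 2) ^ (β + 1)
        = (((j:ℝ) + 1) * s) ^ (β + 1) / 2 ^ (β + 1) :=
      Real.div_rpow (by positivity) (by norm_num) _
    rw [h3, div_le_iff₀ (by positivity)] at h2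
    -- h2 : ((j+1)s)^p ≤ (js)^p * 2^p
    have h4 : (((j:ℝ) + 1) * s) ^ (β + 1) * (((j:ℝ) * s) ^ (β + 1))⁻¹ ≤ 2 ^ (β + 1) :=
      (mul_inv_le_iff₀ hjsp).mpr (by linarith [h2])
    calc (((j:ℝ) * s) ^ (β + 1))⁻¹
        = ((((j:ℝ) + 1) * s) ^ (β + 1))⁻¹
            * ((((j:ℝ) + 1) * s) ^ (β + 1) * (((j:ℝ) * s) ^ (β + 1))⁻¹) := by
          field_simp
      _ ≤ ((((j:ℝ) + 1) * s) ^ (β + 1))⁻¹ * 2 ^ (β + 1) :=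
          mul_le_mul_of_nonneg_left h4 (by positivity)
      _ = 2 ^ (β + 1) * ((((j:ℝ) + 1) * s) ^ (β + 1))⁻¹ := by ring
  have hu2' : nu β c (j + 1) ^ 2
      ≤ (2 * CE * 2 ^ (β + 1)) * ((((j:ℝ) + 1) * s) ^ (β + 1))⁻¹ := by
    calc nu β c (j + 1) ^ 2 ≤ 2 * CE * (((j:ℝ) * s) ^ (β + 1))⁻¹ := hu2
      _ ≤ 2 * CE * (2 ^ (β + 1) * ((((j:ℝ) + 1) * s) ^ (β + 1))⁻¹) :=
          mul_le_mul_of_nonneg_left hinvcomp (by positivity)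
      _ = (2 * CE * 2 ^ (β + 1)) * ((((j:ℝ) + 1) * s) ^ (β + 1))⁻¹ := by ring
  have habsu : |nu β c (j + 1)| ≤ D * Real.sqrt (((((j:ℝ) + 1) * s) ^ (β + 1))⁻¹) := by
    rw [hDdef, ← Real.sqrt_sq_eq_abs, ← Real.sqrt_mul (by positivity) _]
    exact Real.sqrt_le_sqrt hu2'
  have hsqrtinv : Real.sqrt (((((j:ℝ) + 1) * s) ^ (β + 1))⁻¹)
      = (((j:ℝ) + 1) ^ ((β + 1) / 2))⁻¹ * (l ^ ((β + 1) / 4))⁻¹ := by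
    rw [Real.sqrt_inv]
    have h1 : (((j:ℝ) + 1) * s) ^ (β + 1) = ((((j:ℝ) + 1) * s) ^ ((β + 1) / 2)) ^ 2 := by
      rw [sq, ← Real.rpow_add hKs0]
      norm_num
    rw [h1, Real.sqrt_sq (Real.rpow_nonneg hKs0.le _)]
    rw [Real.mul_rpow (by positivity) hs0.le]
    rw [mul_inv]
    congr 1
    congr 1
    rw [hsdef, Real.sqrt_eq_rpow, ← Real.rpow_mul hl0]
    congr 1
    ring
  have hcexp : c ≤ Real.exp (-(l / 2)) := by
    have h1 : Real.exp (-l) = (Real.exp (-(l / 2))) ^ 2 := by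
      rw [sq, ← Real.exp_add]; ring_nf
    have h2 : 1 - l ≤ Real.exp (-l) := by
      have := Real.add_one_le_exp (-l); linarith
    calc c = Real.sqrt (1 - l) := hcdef
      _ ≤ Real.sqrt (Real.exp (-l)) := Real.sqrt_le_sqrt h2
      _ = Real.exp (-(l / 2)) := by rw [h1, Real.sqrt_sq (Real.exp_pos _).le]
  have hck : c ^ (j + 1) ≤ Real.exp (-(((j:ℝ) + 1) * l / 2)) := by
    calc c ^ (j + 1) ≤ (Real.exp (-(l / 2))) ^ (j + 1) := pow_le_pow_left₀ hc0 hcexp (j + 1)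
      _ = Real.exp (((j + 1 : ℕ):ℝ) * (-(l / 2))) := (Real.exp_nat_mul _ _).symm
      _ = Real.exp (-(((j:ℝ) + 1) * l / 2)) := by rw [hK]; congr 1; ring
  have hexplnu : Real.exp (-(((j:ℝ) + 1) * l / 2)) * l ^ (μ - (β + 1) / 4)
      ≤ M * (((j:ℝ) + 1) ^ (μ - (β + 1) / 4))⁻¹ := by
    have hkl0 : (0:ℝ) ≤ ((j:ℝ) + 1) * l := by positivity
    have h1 := hM (((j:ℝ) + 1) * l) hkl0
    have hKν : (0:ℝ) < ((j:ℝ) + 1) ^ (μ - (β + 1) / 4) := Real.rpow_pos_of_pos hK0 _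
    have h2 : l ^ (μ - (β + 1) / 4)
        = (((j:ℝ) + 1) * l) ^ (μ - (β + 1) / 4) * (((j:ℝ) + 1) ^ (μ - (β + 1) / 4))⁻¹ := by
      rw [Real.mul_rpow (by positivity) hl0]
      field_simp
    rw [h2]
    calc Real.exp (-(((j:ℝ) + 1) * l / 2))
          * ((((j:ℝ) + 1) * l) ^ (μ - (β + 1) / 4) * (((j:ℝ) + 1) ^ (μ - (β + 1) / 4))⁻¹)
        = ((((j:ℝ) + 1) * l) ^ (μ - (β + 1) / 4) * Real.exp (-((((j:ℝ) + 1) * l) / 2)))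
          * (((j:ℝ) + 1) ^ (μ - (β + 1) / 4))⁻¹ := by ring_nf
      _ ≤ M * (((j:ℝ) + 1) ^ (μ - (β + 1) / 4))⁻¹ :=
          mul_le_mul_of_nonneg_right h1 (by positivity)
  -- final chain
  rw [hres, abs_mul, abs_of_nonneg (pow_nonneg hc0 _)]
  rw [hK]
  have hlsub : l ^ μ * (l ^ ((β + 1) / 4))⁻¹ = l ^ (μ - (β + 1) / 4) := by
    rw [Real.rpow_sub hl0']; ring
  have hKhalf : (0:ℝ) < ((j:ℝ) + 1) ^ ((β + 1) / 2) := Real.rpow_pos_of_pos hK0 _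
  have hKν : (0:ℝ) < ((j:ℝ) + 1) ^ (μ - (β + 1) / 4) := Real.rpow_pos_of_pos hK0 _
  have hlν : (0:ℝ) ≤ l ^ (μ - (β + 1) / 4) := Real.rpow_nonneg hl0 _
  have hcknn : (0:ℝ) ≤ c ^ (j + 1) := pow_nonneg hc0 _
  have hfin1 : c ^ (j + 1) * |nu β c (j + 1)| * l ^ μ
      ≤ (D * (((j:ℝ) + 1) ^ ((β + 1) / 2))⁻¹)
        * (c ^ (j + 1) * l ^ (μ - (β + 1) / 4)) := by
    have h1 : c ^ (j + 1) * |nu β c (j + 1)| * l ^ μ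
        ≤ c ^ (j + 1) * (D * ((((j:ℝ) + 1) ^ ((β + 1) / 2))⁻¹ * (l ^ ((β + 1) / 4))⁻¹))
          * l ^ μ := by
      have h2 : |nu β c (j + 1)|
          ≤ D * ((((j:ℝ) + 1) ^ ((β + 1) / 2))⁻¹ * (l ^ ((β + 1) / 4))⁻¹) := by
        rw [← hsqrtinv]; exact habsu
      have h3 : (0:ℝ) ≤ l ^ μ := Real.rpow_nonneg hl0 _
      apply mul_le_mul_of_nonneg_right _ h3
      exact mul_le_mul_of_nonneg_left h2 hcknn
    calc c ^ (j + 1) * |nu β c (j + 1)| * l ^ μ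
        ≤ c ^ (j + 1) * (D * ((((j:ℝ) + 1) ^ ((β + 1) / 2))⁻¹ * (l ^ ((β + 1) / 4))⁻¹))
          * l ^ μ := h1
      _ = (D * (((j:ℝ) + 1) ^ ((β + 1) / 2))⁻¹)
          * (c ^ (j + 1) * (l ^ μ * (l ^ ((β + 1) / 4))⁻¹)) := by ring
      _ = (D * (((j:ℝ) + 1) ^ ((β + 1) / 2))⁻¹)
          * (c ^ (j + 1) * l ^ (μ - (β + 1) / 4)) := by rw [hlsub]
  have hfin2 : c ^ (j + 1) * l ^ (μ - (β + 1) / 4) ≤ M * (((j:ℝ) + 1) ^ (μ - (β + 1) / 4))⁻¹ := by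
    calc c ^ (j + 1) * l ^ (μ - (β + 1) / 4)
        ≤ Real.exp (-(((j:ℝ) + 1) * l / 2)) * l ^ (μ - (β + 1) / 4) :=
          mul_le_mul_of_nonneg_right hck hlν
      _ ≤ M * (((j:ℝ) + 1) ^ (μ - (β + 1) / 4))⁻¹ := hexplnu
  have hfin3 : (((j:ℝ) + 1) ^ ((β + 1) / 2))⁻¹ * (((j:ℝ) + 1) ^ (μ - (β + 1) / 4))⁻¹
      = ((j:ℝ) + 1) ^ (-(μ + (β + 1) / 4)) := by
    rw [← mul_inv, ← Real.rpow_add hK0, Real.rpow_neg hK0.le]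
    congr 2
    ring
  calc c ^ (j + 1) * |nu β c (j + 1)| * l ^ μ
      ≤ (D * (((j:ℝ) + 1) ^ ((β + 1) / 2))⁻¹)
        * (c ^ (j + 1) * l ^ (μ - (β + 1) / 4)) := hfin1
    _ ≤ (D * (((j:ℝ) + 1) ^ ((β + 1) / 2))⁻¹)
        * (M * (((j:ℝ) + 1) ^ (μ - (β + 1) / 4))⁻¹) := by
        apply mul_le_mul_of_nonneg_left hfin2
        positivity
    _ = (D * M) * ((((j:ℝ) + 1) ^ ((β + 1) / 2))⁻¹ * (((j:ℝ) + 1) ^ (μ - (β + 1) / 4))⁻¹) := by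
        ring
    _ = (D * M) * ((j:ℝ) + 1) ^ (-(μ + (β + 1) / 4)) := by rw [hfin3]
    _ ≤ max 1 (D * M) * ((j:ℝ) + 1) ^ (-(μ + (β + 1) / 4)) := by
        apply mul_le_mul_of_nonneg_right (le_max_right _ _)
        exact (Real.rpow_pos_of_pos hK0 _).le
end
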